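/- arXiv:1609.00244 — 8 statements merged into one kernel-verified Lean document; each statement's English description precedes it below -/
import Mathlib

section
/- Let H be a Hilbert space (real or complex), let P : H → H be an orthogonal projection (a bounded self-adjoint operator with P² = P), and let M_k : H → H (k ≥ 1) be bounded operators of the form M_k = P + S_k with ∑_k ‖S_k‖ < ∞ (operator norms). Then: (1) for every k the infinite product R_k = M_k M_{k+1} ⋯ exists, i.e. the finite products M_k M_{k+1} ⋯ M_n converge in operator norm as n → ∞; (2) ker P ⊆ ker R_k for every k; (3) R_k → P in operator norm as k → ∞; (4) there exists N such that ker R_k = ker P for every k ≥ N. -/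
open Filter Topology

/-- The ordered partial product `M k * M (k+1) * ⋯ * M (k+n)`. -/
def opProd {A : Type*} [Mul A] (M : ℕ → A) (k : ℕ) : ℕ → A
  | 0 => M k
  | n + 1 => opProd M k n * M (k + n + 1)

/-!
Write `Q n` for the partial products of `P + S j`, `j ≥ 0`. From
`Q (n+1) - P = (Q n - P) P + Q n S (n+1)` and `‖P‖ ≤ 1` one gets
`1 + ‖Q n - P‖ ≤ exp (∑ ‖S j‖)`, so the partial products are uniformly bounded. Since `P² = P`,
`Q (n+1) P - Q (n+1) = Q n (S (n+1) P - S (n+1))` is `O(‖S (n+1)‖)`, hence so is the increment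
`Q (n+1) - Q n = (Q n P - Q n) + Q n S (n+1)`. The products therefore converge to some `R` with
`R P = R`, which gives `ker P ≤ ker R`, and `‖R - P‖ ≤ exp (∑ ‖S j‖) - 1`; applied to the tails
this shows `R k → P`. Once `‖R - P‖ < 1`, a vector `P x` with `R x = 0` is fixed by `P - R`,
which forces `P x = 0`.
-/

theorem opProd_eq_opProd_zero {A : Type*} [Mul A] (M : ℕ → A) (k n : ℕ) :
    opProd M k n = opProd (fun j => M (j + k)) 0 n := by
  induction n with
  | zero => simp [opProd]
  | succ n ih => simp only [opProd, ih]; ring_nf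

section AlmostIdempotentProduct

variable {A : Type*} [NonUnitalNormedRing A] {P : A} {S : ℕ → A}

theorem norm_mul_sub_self_le (hP1 : ‖P‖ ≤ 1) (X : A) : ‖X * P - X‖ ≤ 2 * ‖X‖ :=
  calc ‖X * P - X‖ ≤ ‖X‖ * ‖P‖ + ‖X‖ := (norm_sub_le _ _).trans (by gcongr; exact norm_mul_le _ _)
    _ ≤ 2 * ‖X‖ := by nlinarith [norm_nonneg X]

theorem norm_opProd_sub_le (hP : IsIdempotentElem P) (hP1 : ‖P‖ ≤ 1) (n : ℕ) :
    ‖opProd (P + S ·) 0 n - P‖ ≤ Real.exp (∑ j ∈ Finset.range (n + 1), ‖S j‖) - 1 := by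
  induction n with
  | zero => simp [opProd]; linarith [Real.add_one_le_exp ‖S 0‖]
  | succ n ih =>
    set Q := opProd (P + S ·) 0 n
    have hstep : opProd (P + S ·) 0 (n + 1) - P = (Q - P) * P + Q * S (n + 1) := by
      simp only [opProd, zero_add, Q]
      rw [sub_mul, hP.eq, mul_add]
      abel
    have hQ : ‖Q‖ ≤ ‖Q - P‖ + 1 := (norm_le_norm_sub_add Q P).trans (by gcongr)
    calc ‖opProd (P + S ·) 0 (n + 1) - P‖
        ≤ ‖Q - P‖ * ‖P‖ + ‖Q‖ * ‖S (n + 1)‖ := by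
          rw [hstep]
          exact (norm_add_le _ _).trans (add_le_add (norm_mul_le _ _) (norm_mul_le _ _))
      _ ≤ (‖Q - P‖ + 1) * (1 + ‖S (n + 1)‖) - 1 := by
          nlinarith [norm_nonneg (Q - P), norm_nonneg (S (n + 1))]
      _ ≤ Real.exp (∑ j ∈ Finset.range (n + 1), ‖S j‖) * Real.exp ‖S (n + 1)‖ - 1 := by
          gcongr
          · linarith
          · linarith [Real.add_one_le_exp ‖S (n + 1)‖]
      _ = Real.exp (∑ j ∈ Finset.range (n + 2), ‖S j‖) - 1 := by
          rw [← Real.exp_add, Finset.sum_range_succ _ (n + 1)]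

theorem norm_opProd_sub_le_exp_tsum (hP : IsIdempotentElem P) (hP1 : ‖P‖ ≤ 1)
    (hS : Summable (‖S ·‖)) (n : ℕ) :
    ‖opProd (P + S ·) 0 n - P‖ ≤ Real.exp (∑' j, ‖S j‖) - 1 := by
  refine (norm_opProd_sub_le hP hP1 n).trans ?_
  gcongr
  exact hS.sum_le_tsum _ fun j _ => norm_nonneg _

theorem norm_opProd_le_exp_tsum (hP : IsIdempotentElem P) (hP1 : ‖P‖ ≤ 1)
    (hS : Summable (‖S ·‖)) (n : ℕ) :
    ‖opProd (P + S ·) 0 n‖ ≤ Real.exp (∑' j, ‖S j‖) := by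
  have := norm_opProd_sub_le_exp_tsum hP hP1 hS n
  linarith [norm_le_norm_sub_add (opProd (P + S ·) 0 n) P]

theorem norm_opProd_mul_sub_le (hP : IsIdempotentElem P) (hP1 : ‖P‖ ≤ 1)
    (hS : Summable (‖S ·‖)) (n : ℕ) :
    ‖opProd (P + S ·) 0 n * P - opProd (P + S ·) 0 n‖ ≤
      2 * Real.exp (∑' j, ‖S j‖) * ‖S n‖ := by
  cases n with
  | zero =>
    have hexp : 1 ≤ Real.exp (∑' j, ‖S j‖) :=
      Real.one_le_exp (tsum_nonneg fun _ => norm_nonneg _)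
    have hS0 : (P + S 0) * P - (P + S 0) = S 0 * P - S 0 := by
      rw [add_mul, hP.eq]
      abel
    simp only [opProd, hS0]
    nlinarith [norm_mul_sub_self_le hP1 (S 0), norm_nonneg (S 0)]
  | succ n =>
    have hfactor : opProd (P + S ·) 0 (n + 1) * P - opProd (P + S ·) 0 (n + 1) =
        opProd (P + S ·) 0 n * (S (n + 1) * P - S (n + 1)) := by
      simp only [opProd, zero_add, mul_assoc, add_mul, hP.eq, mul_add, mul_sub]
      abel
    rw [hfactor]
    calc _ ≤ Real.exp (∑' j, ‖S j‖) * (2 * ‖S (n + 1)‖) :=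
          (norm_mul_le _ _).trans (mul_le_mul (norm_opProd_le_exp_tsum hP hP1 hS n)
            (norm_mul_sub_self_le hP1 _) (norm_nonneg _) (Real.exp_pos _).le)
      _ = _ := by ring

theorem cauchySeq_opProd (hP : IsIdempotentElem P) (hP1 : ‖P‖ ≤ 1) (hS : Summable (‖S ·‖)) :
    CauchySeq (opProd (P + S ·) 0) := by
  set B := Real.exp (∑' j, ‖S j‖)
  refine cauchySeq_of_dist_le_of_summable (fun n => 2 * B * ‖S n‖ + B * ‖S (n + 1)‖)
    (fun n => ?_) ((hS.mul_left _).add (((summable_nat_add_iff 1).2 hS).mul_left _))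
  set Q := opProd (P + S ·) 0 n
  have hstep : opProd (P + S ·) 0 n.succ - Q = (Q * P - Q) + Q * S (n + 1) := by
    simp only [opProd, zero_add, Q, mul_add]
    abel
  rw [dist_comm, dist_eq_norm, hstep]
  exact (norm_add_le _ _).trans (add_le_add (norm_opProd_mul_sub_le hP hP1 hS n)
    ((norm_mul_le _ _).trans (by gcongr; exact norm_opProd_le_exp_tsum hP hP1 hS n)))

variable {R : A} (hP : IsIdempotentElem P) (hP1 : ‖P‖ ≤ 1) (hS : Summable (‖S ·‖))
  (hR : Tendsto (opProd (P + S ·) 0) atTop (𝓝 R))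
include hP hP1 hS hR

theorem mul_eq_self_of_tendsto_opProd : R * P = R := by
  have hdefect : Tendsto (fun n => opProd (P + S ·) 0 n * P - opProd (P + S ·) 0 n) atTop
      (𝓝 0) := by
    refine squeeze_zero_norm (norm_opProd_mul_sub_le hP hP1 hS) ?_
    simpa using hS.tendsto_atTop_zero.const_mul (2 * Real.exp (∑' j, ‖S j‖))
  exact sub_eq_zero.mp (tendsto_nhds_unique ((hR.mul_const P).sub hR) hdefect)

theorem norm_sub_le_of_tendsto_opProd : ‖R - P‖ ≤ Real.exp (∑' j, ‖S j‖) - 1 :=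
  le_of_tendsto (hR.sub_const P).norm
    (Eventually.of_forall (norm_opProd_sub_le_exp_tsum hP hP1 hS))

end AlmostIdempotentProduct

namespace ContinuousLinearMap

theorem ker_le_ker_of_mul_eq {R₁ M : Type*} [Semiring R₁] [TopologicalSpace M]
    [AddCommMonoid M] [Module R₁ M] {P R : M →L[R₁] M} (h : R * P = R) :
    LinearMap.ker (P : M →ₗ[R₁] M) ≤ LinearMap.ker (R : M →ₗ[R₁] M) := fun x hx => by
  simp only [LinearMap.mem_ker, coe_coe] at hx ⊢
  rw [← h, mul_apply_eq_comp, hx, map_zero]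

theorem ker_eq_ker_of_norm_sub_lt_one {𝕜 E : Type*} [NontriviallyNormedField 𝕜]
    [NormedAddCommGroup E] [NormedSpace 𝕜 E] {P R : E →L[𝕜] E} (hP : IsIdempotentElem P)
    (h : R * P = R) (hlt : ‖R - P‖ < 1) :
    LinearMap.ker (R : E →ₗ[𝕜] E) = LinearMap.ker (P : E →ₗ[𝕜] E) := by
  refine le_antisymm (fun x hx => ?_) (ker_le_ker_of_mul_eq h)
  simp only [LinearMap.mem_ker, coe_coe] at hx ⊢
  have hfix : (P - R) (P x) = P x := by
    rw [sub_apply, ← mul_apply_eq_comp, hP.eq, ← mul_apply_eq_comp R P, h, hx, sub_zero]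
  by_contra hne
  have hle : ‖P x‖ ≤ ‖R - P‖ * ‖P x‖ :=
    calc ‖P x‖ = ‖(P - R) (P x)‖ := by rw [hfix]
      _ ≤ ‖P - R‖ * ‖P x‖ := le_opNorm _ _
      _ = ‖R - P‖ * ‖P x‖ := by rw [norm_sub_rev]
  exact hlt.not_ge ((le_mul_iff_one_le_left (norm_pos_iff.2 hne)).1 hle)

end ContinuousLinearMap

/-- Convergence of infinite products of almost-projectors on a Hilbert space: if
`M k = P + S k` with `P` an orthogonal projection (bounded, self-adjoint, idempotent) and
`∑ ‖S k‖ < ∞`, then the infinite products `R k = M k * M (k+1) * ⋯` exist (in operator norm),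
`ker P ⊆ ker (R k)` for all `k`, `R k → P` in operator norm, and `ker (R k) = ker P` for all
sufficiently large `k`. -/
theorem inf_product_of_almost_projectors
    {𝕜 : Type*} [RCLike 𝕜] {H : Type*} [NormedAddCommGroup H]
    [InnerProductSpace 𝕜 H] [CompleteSpace H]
    (P : H →L[𝕜] H) (hP_sa : IsSelfAdjoint P) (hP_idem : P * P = P)
    (S M : ℕ → H →L[𝕜] H)
    (hM : ∀ k, M k = P + S k) (hS : Summable fun k => ‖S k‖) :
    ∃ R : ℕ → H →L[𝕜] H,
      (∀ k, Tendsto (fun n => opProd M k n) atTop (nhds (R k))) ∧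
      (∀ k, LinearMap.ker (P : H →ₗ[𝕜] H) ≤ LinearMap.ker (R k : H →ₗ[𝕜] H)) ∧
      Tendsto R atTop (nhds P) ∧
      ∃ N : ℕ, ∀ k ≥ N, LinearMap.ker (R k : H →ₗ[𝕜] H) = LinearMap.ker (P : H →ₗ[𝕜] H) := by
  obtain rfl : M = (P + S ·) := funext hM
  have hP1 : ‖P‖ ≤ 1 := IsStarProjection.norm_le P ⟨hP_idem, hP_sa⟩
  have hSk (k : ℕ) : Summable fun j => ‖S (j + k)‖ := (summable_nat_add_iff k).2 hS
  choose R hR using fun k =>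
    cauchySeq_tendsto_of_complete (cauchySeq_opProd hP_idem hP1 (hSk k))
  have hRP (k : ℕ) : R k * P = R k := mul_eq_self_of_tendsto_opProd hP_idem hP1 (hSk k) (hR k)
  have hRlim : Tendsto R atTop (𝓝 P) := by
    have htail : Tendsto (fun k => Real.exp (∑' j, ‖S (j + k)‖) - 1) atTop (𝓝 0) := by
      simpa using
        ((Real.continuous_exp.tendsto 0).comp (tendsto_sum_nat_add (‖S ·‖))).sub_const 1
    exact tendsto_sub_nhds_zero_iff.mp <| squeeze_zero_norm
      (fun k => norm_sub_le_of_tendsto_opProd hP_idem hP1 (hSk k) (hR k)) htail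
  obtain ⟨N, hN⟩ := eventually_atTop.mp (Metric.tendsto_nhds.mp hRlim 1 one_pos)
  refine ⟨R, fun k => ?_, fun k => ContinuousLinearMap.ker_le_ker_of_mul_eq (hRP k), hRlim, N,
    fun k hk => ContinuousLinearMap.ker_eq_ker_of_norm_sub_lt_one hP_idem (hRP k) ?_⟩
  · rw [funext (opProd_eq_opProd_zero _ k)]
    exact hR k
  · simpa [dist_eq_norm] using hN k hk
end

section
/- Let (δ_{11,k})_{k≥1} and (δ_{12,k})_{k≥1} be complex sequences with ∑_k |δ_{11,k}| < ∞ and ∑_k |δ_{12,k}| < ∞, and let M_k be the 2×2 complex matrix with rows (1 + δ_{11,k}, δ_{12,k}) and (1, 0). Then: (1) for every k ≥ 1 the infinite product R_k = M_k M_{k+1} ⋯ exists; (2) the second column of each limit matrix R_k is zero; (3) if moreover δ_{12,k} ≠ 0 for all k, then every R_k has rank exactly 1, and its kernel is spanned by the vector (0, 1). -/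
open Filter Topology Matrix

/-!
Write `M k = A + E k` with `A = !![1, 0; 1, 0]` and `E k = !![δ₁₁ k, δ₁₂ k; 0, 0]`. In the
max-row-sum norm `‖A‖ = 1`, and `A * A = A`, so every partial product `P n` stays within
`exp (∑ ‖E j‖) - 1` of `A`. The products `P n * A` move only by `P n * E * A`, hence are Cauchy,
and `P n` converges to their limit `R k`, which therefore satisfies `R k * A = R k`: its second
column vanishes. The tails `R k` tend to `A ≠ 0`, and `R k = (M k ⋯ M (k + n)) * R (k + n + 1)`
with an invertible first factor when all `δ₁₂ k ≠ 0`, so no `R k` vanishes. A nonzero `2 × 2`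
matrix with zero second column has rank one and kernel spanned by `(0, 1)`.
-/

open Real Finset

section Semigroup

variable {S : Type*} [Semigroup S]

theorem opProd_add (M : ℕ → S) (k n m : ℕ) :
    opProd M k (n + 1 + m) = opProd M k n * opProd M (k + n + 1) m := by
  induction m with
  | zero => rfl
  | succ m ih =>
    calc opProd M k (n + 1 + (m + 1)) = opProd M k (n + 1 + m) * M (k + n + 1 + m + 1) := by
          rw [← add_assoc, opProd, show k + (n + 1 + m) = k + n + 1 + m by omega]
      _ = _ := by rw [ih, mul_assoc]; rfl

theorem eq_opProd_mul_of_tendsto [TopologicalSpace S] [ContinuousMul S] [T2Space S]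
    {M : ℕ → S} {k : ℕ} (n : ℕ) {L L' : S} (hL : Tendsto (opProd M k) atTop (𝓝 L))
    (hL' : Tendsto (opProd M (k + n + 1)) atTop (𝓝 L')) : L = opProd M k n * L' := by
  have hshift := (tendsto_add_atTop_iff_nat (n + 1)).2 hL
  simp only [add_comm _ (n + 1), opProd_add] at hshift
  exact tendsto_nhds_unique hshift (hL'.const_mul _)

end Semigroup

theorem isUnit_opProd {S : Type*} [Monoid S] {M : ℕ → S} (hM : ∀ j, IsUnit (M j)) (k : ℕ) :
    ∀ n, IsUnit (opProd M k n)
  | 0 => hM k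
  | n + 1 => (isUnit_opProd hM k n).mul (hM _)

section NormedRing

variable {R : Type*} [NormedRing R] {A : R} {E : ℕ → R}

theorem norm_opProd_sub_le_s2 (hA : IsIdempotentElem A) (hA1 : ‖A‖ ≤ 1) (k n : ℕ) :
    ‖opProd (fun j => A + E j) k n - A‖ ≤ exp (∑ j ∈ range (n + 1), ‖E (k + j)‖) - 1 := by
  induction n with
  | zero =>
    show ‖A + E k - A‖ ≤ _
    simp only [add_sub_cancel_left, zero_add, range_one, sum_singleton, add_zero]
    linarith [add_one_le_exp ‖E k‖]
  | succ n ih =>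
    set P := opProd (fun j => A + E j) k n
    set e := ‖E (k + n + 1)‖
    have hP : opProd (fun j => A + E j) k (n + 1) - A
        = (P - A) * (A + E (k + n + 1)) + A * E (k + n + 1) := by
      show P * _ - A = _
      rw [sub_mul, mul_add, mul_add, hA.eq]
      abel
    have hnorm : ‖opProd (fun j => A + E j) k (n + 1) - A‖ ≤ ‖P - A‖ * (1 + e) + e := by
      rw [hP]
      refine (norm_add_le _ _).trans (add_le_add ((norm_mul_le _ _).trans ?_) ?_)
      · gcongr
        exact (norm_add_le _ _).trans (by gcongr)
      · exact (norm_mul_le _ _).trans (mul_le_of_le_one_left (norm_nonneg _) hA1)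
    rw [sum_range_succ, exp_add, ← add_assoc]
    have he : 1 + e ≤ exp e := by linarith [add_one_le_exp e]
    have he0 : 0 ≤ e := norm_nonneg _
    nlinarith [norm_nonneg (P - A), exp_pos (∑ j ∈ range (n + 1), ‖E (k + j)‖)]

theorem summable_norm_add_left (hE : Summable fun j => ‖E j‖) (k : ℕ) :
    Summable fun j => ‖E (k + j)‖ := by
  simpa only [add_comm k] using (summable_nat_add_iff k).2 hE

variable (hA : IsIdempotentElem A) (hA1 : ‖A‖ ≤ 1) (hE : Summable fun j => ‖E j‖)
include hA hA1 hE

theorem norm_opProd_sub_le_tsum (k n : ℕ) :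
    ‖opProd (fun j => A + E j) k n - A‖ ≤ exp (∑' j, ‖E (k + j)‖) - 1 := by
  refine (norm_opProd_sub_le_s2 hA hA1 k n).trans ?_
  gcongr
  exact Summable.sum_le_tsum _ (fun _ _ => norm_nonneg _) (summable_norm_add_left hE k)

theorem norm_opProd_le (k n : ℕ) :
    ‖opProd (fun j => A + E j) k n‖ ≤ exp (∑' j, ‖E (k + j)‖) := by
  linarith [norm_sub_norm_le (opProd (fun j => A + E j) k n) A,
    norm_opProd_sub_le_tsum hA hA1 hE k n]

theorem exists_tendsto_opProd [CompleteSpace R] (k : ℕ) :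
    ∃ L, Tendsto (opProd (fun j => A + E j) k) atTop (𝓝 L) ∧ L * A = L := by
  set P := opProd (fun j => A + E j) k
  set B := exp (∑' j, ‖E (k + j)‖)
  have hPB : ∀ n, ‖P n‖ ≤ B := norm_opProd_le hA hA1 hE k
  have hEk : Summable fun n => ‖E (k + n + 1)‖ := by
    simpa only [add_assoc] using (summable_nat_add_iff 1).2 (summable_norm_add_left hE k)
  have hstep : ∀ n, P (n + 1) = P n * A + P n * E (k + n + 1) := fun n => mul_add _ _ _
  have hcauchy : CauchySeq fun n => P n * A := by
    refine cauchySeq_of_dist_le_of_summable (fun n => B * ‖E (k + n + 1)‖) (fun n => ?_)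
      (hEk.mul_left B)
    rw [dist_eq_norm', hstep, add_mul, mul_assoc, hA.eq, add_sub_cancel_left]
    calc ‖P n * E (k + n + 1) * A‖ ≤ ‖P n‖ * ‖E (k + n + 1)‖ * ‖A‖ := norm_mul₃_le
      _ ≤ B * ‖E (k + n + 1)‖ * 1 := by gcongr; exact hPB n
      _ = B * ‖E (k + n + 1)‖ := mul_one _
  obtain ⟨L, hL⟩ := cauchySeq_tendsto_of_complete hcauchy
  have hsmall : Tendsto (fun n => P n * E (k + n + 1)) atTop (𝓝 0) := by
    refine squeeze_zero_norm (fun n => (norm_mul_le _ _).trans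
      (mul_le_mul_of_nonneg_right (hPB n) (norm_nonneg _))) ?_
    simpa using hEk.tendsto_atTop_zero.const_mul B
  have hPL : Tendsto P atTop (𝓝 L) :=
    (tendsto_add_atTop_iff_nat 1).1 (by simpa only [hstep, add_zero] using hL.add hsmall)
  exact ⟨L, hPL, tendsto_nhds_unique (hPL.mul_const A) hL⟩

theorem norm_sub_le_of_tendsto_opProd_s2 {k : ℕ} {L : R}
    (hL : Tendsto (opProd (fun j => A + E j) k) atTop (𝓝 L)) :
    ‖L - A‖ ≤ exp (∑' j, ‖E (k + j)‖) - 1 :=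
  le_of_tendsto' (hL.sub_const A).norm (norm_opProd_sub_le_tsum hA hA1 hE k)

theorem tendsto_of_tendsto_opProd {L : ℕ → R}
    (hL : ∀ k, Tendsto (opProd (fun j => A + E j) k) atTop (𝓝 (L k))) :
    Tendsto L atTop (𝓝 A) := by
  have htail : Tendsto (fun k => exp (∑' j, ‖E (k + j)‖) - 1) atTop (𝓝 0) := by
    simpa [add_comm] using
      ((continuous_exp.tendsto 0).comp (tendsto_sum_nat_add fun j => ‖E j‖)).sub_const 1
  rw [tendsto_iff_norm_sub_tendsto_zero]
  exact squeeze_zero (fun _ => norm_nonneg _)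
    (fun k => norm_sub_le_of_tendsto_opProd_s2 hA hA1 hE (hL k)) htail

end NormedRing

namespace Matrix

variable {K : Type*}

theorem mulVec_eq_smul_col_zero [CommSemiring K] {R : Matrix (Fin 2) (Fin 2) K}
    (h : ∀ i, R i 1 = 0) (v : Fin 2 → K) : R *ᵥ v = v 0 • R.col 0 := by
  ext i
  simp [mulVec, dotProduct, Fin.sum_univ_two, h i, mul_comm]

theorem col_zero_ne_zero_of_col_one_eq_zero [Zero K] {R : Matrix (Fin 2) (Fin 2) K}
    (h : ∀ i, R i 1 = 0) (h0 : R ≠ 0) : R.col 0 ≠ 0 := by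
  refine fun hc => h0 (ext fun i j => ?_)
  fin_cases j
  · exact congrFun hc i
  · exact h i

variable [Field K] {R : Matrix (Fin 2) (Fin 2) K}

theorem mulVec_eq_zero_iff_of_col_one_eq_zero (h : ∀ i, R i 1 = 0) (h0 : R ≠ 0)
    (v : Fin 2 → K) : R *ᵥ v = 0 ↔ ∃ c : K, v = c • ![0, 1] := by
  rw [mulVec_eq_smul_col_zero h, smul_eq_zero,
    or_iff_left (col_zero_ne_zero_of_col_one_eq_zero h h0)]
  constructor
  · intro hv
    exact ⟨v 1, funext fun i => by fin_cases i <;> simp [hv]⟩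
  · rintro ⟨c, rfl⟩
    simp

theorem rank_eq_one_of_col_one_eq_zero (h : ∀ i, R i 1 = 0) (h0 : R ≠ 0) : R.rank = 1 := by
  have hker : LinearMap.ker R.mulVecLin = Submodule.span K {![0, 1]} := by
    ext v
    rw [LinearMap.mem_ker, mulVecLin_apply, mulVec_eq_zero_iff_of_col_one_eq_zero h h0,
      Submodule.mem_span_singleton]
    simp only [eq_comm]
  have := R.mulVecLin.finrank_range_add_finrank_ker
  rw [hker, finrank_span_singleton (by simp), Module.finrank_fin_fun] at this
  rw [rank]
  omega

end Matrix

attribute [local instance] Matrix.linftyOpNormedRing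

/-- Let `M k = !![1 + δ₁₁ k, δ₁₂ k; 1, 0]` with `∑ |δ₁₁ k| < ∞` and `∑ |δ₁₂ k| < ∞`.
Then the infinite products `R k = M k * M (k+1) * ⋯` exist (entrywise limits of the
partial products), the second column of each `R k` vanishes, and if moreover all
`δ₁₂ k ≠ 0`, then each `R k` has rank exactly `1` and its kernel is spanned by `(0, 1)`. -/
theorem inf_product_two_by_two
    (d11 d12 : ℕ → ℂ)
    (h11 : Summable fun k => ‖d11 k‖)
    (h12 : Summable fun k => ‖d12 k‖)
    (M : ℕ → Matrix (Fin 2) (Fin 2) ℂ)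
    (hM : ∀ k, M k = !![1 + d11 k, d12 k; 1, 0]) :
    ∃ R : ℕ → Matrix (Fin 2) (Fin 2) ℂ,
      (∀ k, Tendsto (fun m => opProd M k m) atTop (nhds (R k))) ∧
      (∀ k, R k 0 1 = 0 ∧ R k 1 1 = 0) ∧
      ((∀ k, d12 k ≠ 0) → ∀ k,
        (R k).rank = 1 ∧
        ∀ v : Fin 2 → ℂ, (R k).mulVec v = 0 ↔ ∃ c : ℂ, v = c • ![0, 1]) := by
  set A : Matrix (Fin 2) (Fin 2) ℂ := !![1, 0; 1, 0]
  set E : ℕ → Matrix (Fin 2) (Fin 2) ℂ := fun k => !![d11 k, d12 k; 0, 0]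
  have hME : M = fun k => A + E k := funext fun k => by
    rw [hM]; ext i j; fin_cases i <;> fin_cases j <;> simp [A, E]
  have hA : IsIdempotentElem A := by
    ext i j; fin_cases i <;> fin_cases j <;> simp [A, mul_apply, Fin.sum_univ_two]
  have hA1 : ‖A‖ ≤ 1 := by rw [linfty_opNorm_def]; simp [A, Fin.univ_succ]
  have hA0 : A ≠ 0 := fun h => by simpa [A] using congrFun (congrFun h 0) 0
  have hE : Summable fun k => ‖E k‖ := by
    simpa [E, linfty_opNorm_def, Fin.univ_succ] using h11.add h12
  subst hME
  -- The matrix norm is only a local instance: completeness for its uniformity is not inferred.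
  have : @CompleteSpace (Matrix (Fin 2) (Fin 2) ℂ) PseudoMetricSpace.toUniformSpace :=
    Matrix.instCompleteSpace _ _ _
  choose R hR hRA using exists_tendsto_opProd hA hA1 hE
  have hcol : ∀ k i, R k i 1 = 0 := fun k i => by
    rw [← hRA k]; simp [A, mul_apply, Fin.sum_univ_two]
  refine ⟨R, hR, fun k => ⟨hcol k 0, hcol k 1⟩, fun hd12 k => ?_⟩
  obtain ⟨m, hkm, hRm⟩ := ((eventually_gt_atTop k).and
    ((tendsto_of_tendsto_opProd hA hA1 hE hR).eventually_ne hA0)).exists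
  obtain ⟨n, rfl⟩ : ∃ n, m = k + n + 1 := ⟨m - k - 1, by omega⟩
  have hunit : ∀ j, IsUnit (A + E j) := fun j => by
    rw [isUnit_iff_isUnit_det, show A + E j = _ from hM j, det_fin_two_of]
    simpa using hd12 j
  have hRk : R k ≠ 0 := by
    rw [eq_opProd_mul_of_tendsto n (hR k) (hR _), Ne,
      (isUnit_opProd hunit k n).mul_right_eq_zero]
    exact hRm
  exact ⟨rank_eq_one_of_col_one_eq_zero (hcol k) hRk,
    mulVec_eq_zero_iff_of_col_one_eq_zero (hcol k) hRk⟩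
end

section
/- Let (δ_{11,k})_{k≥1} and (δ_{12,k})_{k≥1} be complex sequences with ∑_k |δ_{11,k}| < ∞ and ∑_k |δ_{12,k}| < ∞, let M_k be the 2×2 complex matrix with rows (1 + δ_{11,k}, δ_{12,k}) and (1, 0), and let R_k = M_k M_{k+1} ⋯ be the infinite products (which exist). Define c_k = (R_k)_{21} for k ≥ 1 and c_0 = (R_1)_{11}. Then for every k ≥ 1 one has (R_k)_{11} = c_{k−1} (so that R_k applied to the vector (1,0) gives (c_{k−1}, c_k)), the sequence (c_k) satisfies the recurrence c_{k−1} = (1 + δ_{11,k}) c_k + δ_{12,k} c_{k+1} for every k ≥ 1, and c_k / c_{k−1} → 1 as k → ∞ (in particular c_k ≠ 0 for all sufficiently large k). -/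
/-!
The matrices `M k` tend to the idempotent `A = !![1, 0; 1, 0]`, which has norm `1` for the
row-sum operator norm. Since `A * A = A`, a product `P * M` satisfies
`P * M - A = (P - A) * M + A * (M - A)`, so by induction
`‖M k * ⋯ * M (k+n) - A‖ ≤ ∏ (1 + ‖M j - A‖) - 1 ≤ exp (∑_{j ≥ k} ‖M j - A‖) - 1`.
Hence `R k → A`, and in particular `c k = (R k)₂₁ → 1`, which gives the ratio limit.
The identities for the entries come from `R k = M k * R (k+1)`.
-/

open Filter Topology Matrix Finset

lemma opProd_succ_left {A : Type*} [Semigroup A] (M : ℕ → A) (k n : ℕ) :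
    opProd M k (n + 1) = M k * opProd M (k + 1) n := by
  induction n with
  | zero => simp [opProd]
  | succ n ih =>
    rw [opProd, ih, mul_assoc, opProd, show k + (n + 1) + 1 = k + 1 + n + 1 by omega]

lemma opProd_limit_eq_mul {A : Type*} [Semigroup A] [TopologicalSpace A] [T2Space A]
    [ContinuousMul A] {M R : ℕ → A} (hR : ∀ k, Tendsto (opProd M k) atTop (𝓝 (R k))) (k : ℕ) :
    R k = M k * R (k + 1) :=
  tendsto_nhds_unique ((hR k).comp (tendsto_add_atTop_nat 1))
    (((hR (k + 1)).const_mul (M k)).congr fun n => (opProd_succ_left M k n).symm)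

section NormedRing

variable {A : Type*} [NormedRing A] {a : A}

lemma norm_opProd_sub_le_prod (ha : IsIdempotentElem a) (ha1 : ‖a‖ ≤ 1) (M : ℕ → A) (k n : ℕ) :
    ‖opProd M k n - a‖ ≤ ∏ j ∈ range (n + 1), (1 + ‖M (k + j) - a‖) - 1 := by
  induction n with
  | zero => simp [opProd]
  | succ n ih =>
    set P := opProd M k n
    set X := M (k + (n + 1))
    have hsplit : opProd M k (n + 1) - a = (P - a) * X + a * (X - a) := by
      rw [sub_mul, mul_sub, ha.eq, sub_add_sub_cancel]
      rfl
    have hX : ‖X‖ ≤ 1 + ‖X - a‖ :=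
      calc ‖X‖ = ‖a + (X - a)‖ := by rw [add_sub_cancel]
        _ ≤ ‖a‖ + ‖X - a‖ := norm_add_le _ _
        _ ≤ 1 + ‖X - a‖ := by linarith
    have hprod : 0 ≤ ∏ j ∈ range (n + 1), (1 + ‖M (k + j) - a‖) - 1 :=
      (norm_nonneg _).trans ih
    calc ‖opProd M k (n + 1) - a‖ ≤ ‖P - a‖ * ‖X‖ + ‖a‖ * ‖X - a‖ := by
          rw [hsplit]
          exact (norm_add_le _ _).trans (add_le_add (norm_mul_le _ _) (norm_mul_le _ _))
      _ ≤ (∏ j ∈ range (n + 1), (1 + ‖M (k + j) - a‖) - 1) * (1 + ‖X - a‖) + 1 * ‖X - a‖ := by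
          gcongr
      _ = ∏ j ∈ range (n + 1 + 1), (1 + ‖M (k + j) - a‖) - 1 := by
          rw [prod_range_succ _ (n + 1)]
          ring

lemma norm_opProd_sub_le_exp_tsum_s3 (ha : IsIdempotentElem a) (ha1 : ‖a‖ ≤ 1) {M : ℕ → A}
    (hM : Summable fun j => ‖M j - a‖) (k n : ℕ) :
    ‖opProd M k n - a‖ ≤ Real.exp (∑' j, ‖M (j + k) - a‖) - 1 := by
  refine (norm_opProd_sub_le_prod ha ha1 M k n).trans (sub_le_sub_right ?_ 1)
  calc ∏ j ∈ range (n + 1), (1 + ‖M (k + j) - a‖)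
      ≤ Real.exp (∑ j ∈ range (n + 1), ‖M (j + k) - a‖) := by
        simpa only [add_comm k] using Real.prod_one_add_le_exp_sum _ fun j => norm_nonneg _
    _ ≤ Real.exp (∑' j, ‖M (j + k) - a‖) := by
        gcongr
        exact ((summable_nat_add_iff k).2 hM).sum_le_tsum _ fun j _ => norm_nonneg _

theorem tendsto_of_tendsto_opProd_s3 (ha : IsIdempotentElem a) (ha1 : ‖a‖ ≤ 1) {M R : ℕ → A}
    (hM : Summable fun j => ‖M j - a‖) (hR : ∀ k, Tendsto (opProd M k) atTop (𝓝 (R k))) :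
    Tendsto R atTop (𝓝 a) := by
  have hbound : ∀ k, ‖R k - a‖ ≤ Real.exp (∑' j, ‖M (j + k) - a‖) - 1 := fun k =>
    le_of_tendsto ((hR k).sub_const a).norm
      (Eventually.of_forall (norm_opProd_sub_le_exp_tsum_s3 ha ha1 hM k))
  have htail : Tendsto (fun k => Real.exp (∑' j, ‖M (j + k) - a‖) - 1) atTop (𝓝 0) := by
    simpa using ((Real.continuous_exp.tendsto 0).comp (tendsto_sum_nat_add fun j => ‖M j - a‖)).sub_const 1
  exact tendsto_iff_norm_sub_tendsto_zero.2 (squeeze_zero (fun _ => norm_nonneg _) hbound htail)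

end NormedRing

section RowSumNorm

attribute [local instance] Matrix.linftyOpNormedRing

lemma tendsto_apply_one_zero_of_tendsto_opProd {d11 d12 : ℕ → ℂ}
    (h11 : Summable fun k => ‖d11 k‖) (h12 : Summable fun k => ‖d12 k‖)
    {M R : ℕ → Matrix (Fin 2) (Fin 2) ℂ} (hM : ∀ k, M k = !![1 + d11 k, d12 k; 1, 0])
    (hR : ∀ k, Tendsto (opProd M k) atTop (𝓝 (R k))) :
    Tendsto (fun k => R k 1 0) atTop (𝓝 1) := by
  set A : Matrix (Fin 2) (Fin 2) ℂ := !![1, 0; 1, 0]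
  have hA : IsIdempotentElem A := by
    ext i j; fin_cases i <;> fin_cases j <;> simp [A, Matrix.mul_apply]
  have hA1 : ‖A‖ ≤ 1 := by
    rw [linfty_opNorm_def, Fin.univ_succ]; simp [A]
  have hMA : ∀ k, ‖M k - A‖ = ‖d11 k‖ + ‖d12 k‖ := by
    intro k
    have : M k - A = !![d11 k, d12 k; 0, 0] := by
      rw [hM]; ext i j; fin_cases i <;> fin_cases j <;> simp [A]
    rw [this, linfty_opNorm_def, Fin.univ_succ]; simp
  have hRA := tendsto_of_tendsto_opProd_s3 hA hA1 (by simpa only [hMA] using h11.add h12) hR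
  exact ((continuous_apply 0).comp (continuous_apply 1)).tendsto A |>.comp hRA

end RowSumNorm

/-- Let `M k = !![1 + δ₁₁ k, δ₁₂ k; 1, 0]` with `∑ |δ₁₁ k| < ∞`, `∑ |δ₁₂ k| < ∞`, and let
`R k` be the infinite products `M k * M (k+1) * ⋯`. Put `c k = (R k)₂₁` for `k ≥ 1` and
`c 0 = (R 1)₁₁`. Then `(R k)₁₁ = c (k-1)` for all `k ≥ 1` (so `R k` applied to `(1,0)` gives
`(c (k-1), c k)`), the sequence `c` satisfies the recurrence
`c (k-1) = (1 + δ₁₁ k) * c k + δ₁₂ k * c (k+1)` for all `k ≥ 1`, and `c (k+1) / c k → 1`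
(in particular `c k ≠ 0` for all sufficiently large `k`). -/
theorem inf_product_two_by_two_solution
    (d11 d12 : ℕ → ℂ)
    (h11 : Summable fun k => ‖d11 k‖)
    (h12 : Summable fun k => ‖d12 k‖)
    (M : ℕ → Matrix (Fin 2) (Fin 2) ℂ)
    (hM : ∀ k, M k = !![1 + d11 k, d12 k; 1, 0])
    (R : ℕ → Matrix (Fin 2) (Fin 2) ℂ)
    (hR : ∀ k, Tendsto (fun m => opProd M k m) atTop (nhds (R k)))
    (c : ℕ → ℂ) (hc0 : c 0 = R 1 0 0)
    (hck : ∀ k, 1 ≤ k → c k = R k 1 0) :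
    (∀ k : ℕ, 1 ≤ k → R k 0 0 = c (k - 1)) ∧
    (∀ k : ℕ, 1 ≤ k → c (k - 1) = (1 + d11 k) * c k + d12 k * c (k + 1)) ∧
    Tendsto (fun k => c (k + 1) / c k) atTop (nhds 1) ∧
    (∃ N : ℕ, ∀ k ≥ N, c k ≠ 0) := by
  have hrel := opProd_limit_eq_mul hR
  have hR10 : ∀ k, R k 1 0 = R (k + 1) 0 0 := fun k => by
    rw [hrel k, hM]; simp [Matrix.mul_apply]
  have hR00 : ∀ k, R k 0 0 = (1 + d11 k) * R (k + 1) 0 0 + d12 k * R (k + 1) 1 0 := fun k => by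
    rw [hrel k, hM]; simp [Matrix.mul_apply]
  have hfirst : ∀ k, 1 ≤ k → R k 0 0 = c (k - 1) := by
    rintro (_ | _ | k) hk
    · omega
    · exact hc0.symm
    · rw [← hR10, ← hck _ (by omega)]; rfl
  have hc : Tendsto c atTop (𝓝 1) :=
    (tendsto_apply_one_zero_of_tendsto_opProd h11 h12 hM hR).congr'
      (eventually_atTop.2 ⟨1, fun k hk => (hck k hk).symm⟩)
  refine ⟨hfirst, fun k hk => ?_, ?_, ?_⟩
  · rw [← hfirst k hk, hR00, ← hR10, ← hck k hk, ← hck (k + 1) (by omega)]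
  · simpa [Function.comp_def, Pi.div_def] using (hc.comp (tendsto_add_atTop_nat 1)).div hc one_ne_zero
  · exact eventually_atTop.1 (hc.eventually_ne one_ne_zero)
end

section
/- Let f, g, h : ℕ → ℂ be sequences such that f_k ≠ 0 and h_k ≠ 0 for every k, and f_k = o(g_k) and h_k = o(g_k) as k → ∞ (i.e. f_k/g_k → 0 and h_k/g_k → 0, where g_k ≠ 0 for all sufficiently large k). Then there exists a sequence (a_k)_{k≥0} of complex numbers, not identically zero, satisfying the three-term recurrence f_k a_{k−1} + g_k a_k + h_k a_{k+1} = 0 for every k ≥ 1, such that the power series ∑_{k≥0} a_k z^k has infinite radius of convergence; and it is unique up to a constant factor: any sequence (a'_k)_{k≥0} satisfying the same recurrence for every k ≥ 1 and such that ∑_{k≥0} a'_k z^k has positive (possibly infinite) radius of convergence is of the form a'_k = c·a_k for some constant c ∈ ℂ. -/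
/-!
Past an index `N` beyond which `‖f k‖ + ‖h k‖ ≤ ‖g k‖ / 2`, solving the recurrence for its middle
term is a contraction on bounded sequences equal to `1` up to `N`. Its fixed point extends
backwards (as `f k ≠ 0`) to a solution `a`, and since `(‖f k‖ + ‖h k‖) / ‖g k‖ → 0`, the tail of a
bounded solution decays faster than every geometric sequence.

Conversely, if `a'` is a solution with `a' k * z ^ k → 0` for some `z ≠ 0`, then
`e = a' - a' N • a` is a solution vanishing at `N`. Such a solution has nondecreasing norm from `N`
on and eventually grows faster than `‖z‖⁻¹ ^ k`, so `e k * z ^ k → 0` forces `e (N + 1) = 0`; and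
since `f k, h k ≠ 0`, a solution vanishing at two consecutive indices vanishes identically.
-/

open Filter Topology

section Field

variable {K : Type*} [Field K] (f g h : ℕ → K)

def IsThreeTermSolution (a : ℕ → K) : Prop :=
  ∀ k, f (k + 1) * a k + g (k + 1) * a (k + 1) + h (k + 1) * a (k + 2) = 0

def extendBackward (N : ℕ) (u : ℕ → K) (k : ℕ) : K :=
  if N ≤ k then u k
  else -(g (k + 1) * extendBackward N u (k + 1) + h (k + 1) * extendBackward N u (k + 2)) / f (k + 1)
termination_by N - k

variable {f g h} {N : ℕ} {u : ℕ → K}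

theorem extendBackward_of_le {k : ℕ} (hk : N ≤ k) : extendBackward f g h N u k = u k := by
  rw [extendBackward, if_pos hk]

theorem extendBackward_of_lt {k : ℕ} (hk : k < N) :
    extendBackward f g h N u k = -(g (k + 1) * extendBackward f g h N u (k + 1) +
      h (k + 1) * extendBackward f g h N u (k + 2)) / f (k + 1) := by
  rw [extendBackward, if_neg (not_le.2 hk)]

theorem isThreeTermSolution_extendBackward (hf : ∀ k, f k ≠ 0)
    (hu : ∀ k ≥ N, f (k + 1) * u k + g (k + 1) * u (k + 1) + h (k + 1) * u (k + 2) = 0) :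
    IsThreeTermSolution f g h (extendBackward f g h N u) := by
  intro k
  rcases le_or_gt N k with hk | hk
  · rw [extendBackward_of_le hk, extendBackward_of_le (by omega), extendBackward_of_le (by omega)]
    exact hu k hk
  · rw [extendBackward_of_lt hk, mul_div_cancel₀ _ (hf _)]
    ring

theorem IsThreeTermSolution.eq_zero_of_apply_of_apply_succ {e : ℕ → K}
    (he : IsThreeTermSolution f g h e) (hf : ∀ k, f k ≠ 0) (hh : ∀ k, h k ≠ 0)
    (h₀ : e N = 0) (h₁ : e (N + 1) = 0) : e = 0 := by
  set P : ℕ → Prop := fun k => e k = 0 ∧ e (k + 1) = 0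
  have hstep : ∀ k, P k ↔ P (k + 1) := fun k => by
    have := he k
    refine ⟨fun hk => ⟨hk.2, ?_⟩, fun hk => ⟨?_, hk.1⟩⟩
    · simpa [hk.1, hk.2, hh] using this
    · simpa [hk.1, hk.2, hf] using this
  have hP : ∀ k, P k ↔ P 0 := fun k => by
    induction k with
    | zero => rfl
    | succ k ih => exact (hstep k).symm.trans ih
  funext k
  exact ((hP k).2 ((hP N).1 ⟨h₀, h₁⟩)).1

end Field

theorem exists_ge_forall_norm_add_norm_le {E F : Type*} [SeminormedAddCommGroup E]
    [SeminormedAddCommGroup F] {f h : ℕ → E} {g : ℕ → F} (hfo : f =o[atTop] g)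
    (hho : h =o[atTop] g) {ρ : ℝ} (hρ : 0 < ρ) (N : ℕ) :
    ∃ K ≥ N, ∀ k ≥ K, ‖f (k + 1)‖ + ‖h (k + 1)‖ ≤ ρ * ‖g (k + 1)‖ := by
  obtain ⟨K, hK⟩ := eventually_atTop.1 ((hfo.norm_left.add hho.norm_left).def hρ)
  refine ⟨max K N, le_max_right _ _, fun k hk => ?_⟩
  simpa [Real.norm_of_nonneg (add_nonneg (norm_nonneg _) (norm_nonneg _))] using
    hK (k + 1) (by omega)

section Normed

variable {𝕜 : Type*} [NormedField 𝕜] {f g h e : ℕ → 𝕜}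

theorem IsThreeTermSolution.norm_le_mul_pow (he : IsThreeTermSolution f g h e)
    (hh : ∀ k, h k ≠ 0) {K : ℕ} {M ρ : ℝ}
    (hcoef : ∀ k ≥ K, ‖f (k + 1)‖ + ‖h (k + 1)‖ ≤ ρ * ‖g (k + 1)‖) (hM : ∀ k ≥ K, ‖e k‖ ≤ M) :
    ∀ n, ∀ k ≥ K + n, ‖e k‖ ≤ M * ρ ^ n := by
  intro n
  induction n with
  | zero => simpa using hM
  | succ n ih =>
    intro k hk
    obtain ⟨i, rfl⟩ : ∃ i, k = i + 1 := ⟨k - 1, by omega⟩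
    have hcoef := hcoef i (by omega)
    have hg : 0 < ‖g (i + 1)‖ := by
      refine (norm_nonneg _).lt_of_ne fun hg => ?_
      rw [← hg, mul_zero] at hcoef
      linarith [norm_nonneg (f (i + 1)), norm_pos_iff.2 (hh (i + 1))]
    have hrec : g (i + 1) * e (i + 1) = -(f (i + 1) * e i + h (i + 1) * e (i + 2)) := by
      linear_combination he i
    refine le_of_mul_le_mul_left ?_ hg
    calc ‖g (i + 1)‖ * ‖e (i + 1)‖
        = ‖f (i + 1) * e i + h (i + 1) * e (i + 2)‖ := by rw [← norm_mul, hrec, norm_neg]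
      _ ≤ ‖f (i + 1)‖ * (M * ρ ^ n) + ‖h (i + 1)‖ * (M * ρ ^ n) := by
          refine norm_add_le_of_le ?_ ?_ <;> rw [norm_mul] <;> gcongr <;> exact ih _ (by omega)
      _ = (‖f (i + 1)‖ + ‖h (i + 1)‖) * (M * ρ ^ n) := by ring
      _ ≤ ρ * ‖g (i + 1)‖ * (M * ρ ^ n) := by
          gcongr
          exact (norm_nonneg _).trans (ih i (by omega))
      _ = ‖g (i + 1)‖ * (M * ρ ^ (n + 1)) := by ring

section Complete

variable [CompleteSpace 𝕜]

theorem summable_mul_pow_of_norm_le {a : ℕ → 𝕜} {z : 𝕜} {K : ℕ} {M ρ : ℝ} (hρ : 0 ≤ ρ)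
    (hρz : ρ * ‖z‖ < 1) (ha : ∀ n, ‖a (K + n)‖ ≤ M * ρ ^ n) : Summable fun k => a k * z ^ k := by
  rw [← summable_nat_add_iff K]
  refine Summable.of_norm_bounded
    ((summable_geometric_of_lt_one (by positivity) hρz).mul_left (M * ‖z‖ ^ K)) fun n => ?_
  calc ‖a (n + K) * z ^ (n + K)‖ = ‖a (K + n)‖ * ‖z‖ ^ (n + K) := by
        rw [norm_mul, norm_pow, add_comm n K]
    _ ≤ M * ρ ^ n * ‖z‖ ^ (n + K) := by gcongr; exact ha n
    _ = M * ‖z‖ ^ K * (ρ * ‖z‖) ^ n := by ring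

theorem IsThreeTermSolution.summable_mul_pow (he : IsThreeTermSolution f g h e)
    (hh : ∀ k, h k ≠ 0) (hfo : f =o[atTop] g) (hho : h =o[atTop] g) {N : ℕ} {M : ℝ}
    (hM : ∀ k ≥ N, ‖e k‖ ≤ M) (z : 𝕜) : Summable fun k => e k * z ^ k := by
  have hρ : 0 < (‖z‖ + 1)⁻¹ := by positivity
  obtain ⟨K, hKN, hK⟩ := exists_ge_forall_norm_add_norm_le hfo hho hρ N
  refine summable_mul_pow_of_norm_le hρ.le ?_ fun n =>
    he.norm_le_mul_pow hh hK (fun k hk => hM k (hKN.trans hk)) n _ le_rfl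
  rw [inv_mul_lt_one₀ (by positivity)]
  linarith

open BoundedContinuousFunction in
theorem exists_bounded_tail_solution {c : NNReal} (hc : c < 1) (N : ℕ)
    (hcoef : ∀ k ≥ N, ‖f (k + 1)‖ + ‖h (k + 1)‖ ≤ c * ‖g (k + 1)‖) :
    ∃ u : ℕ → 𝕜, u N = 1 ∧ (∃ M, ∀ k, ‖u k‖ ≤ M) ∧
      ∀ k ≥ N, f (k + 1) * u k + g (k + 1) * u (k + 1) + h (k + 1) * u (k + 2) = 0 := by
  set S : (ℕ →ᵇ 𝕜) → ℕ → 𝕜 := fun v i => -(f (i + 1) * v i + h (i + 1) * v (i + 2)) / g (i + 1)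
  have hS : ∀ v i, N ≤ i → ‖S v i‖ ≤ c * ‖v‖ := by
    intro v i hi
    rw [norm_div, norm_neg]
    refine div_le_of_le_mul₀ (norm_nonneg _) (by positivity) ?_
    calc ‖f (i + 1) * v i + h (i + 1) * v (i + 2)‖
        ≤ ‖f (i + 1)‖ * ‖v‖ + ‖h (i + 1)‖ * ‖v‖ := by
          refine norm_add_le_of_le ?_ ?_ <;> rw [norm_mul] <;> gcongr <;> exact v.norm_coe_le_norm _
      _ = (‖f (i + 1)‖ + ‖h (i + 1)‖) * ‖v‖ := by ring
      _ ≤ c * ‖g (i + 1)‖ * ‖v‖ := by gcongr; exact hcoef i hi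
      _ = c * ‖v‖ * ‖g (i + 1)‖ := by ring
  have hS_sub : ∀ u v i, S u i - S v i = S (u - v) i := fun u v i => by
    simp only [S, coe_sub, Pi.sub_apply]
    ring
  let T : (ℕ →ᵇ 𝕜) → (ℕ →ᵇ 𝕜) := fun u =>
    ofNormedAddCommGroupDiscrete (fun k => if k ≤ N then 1 else S u (k - 1)) (max 1 (c * ‖u‖))
      fun k => by
        split_ifs with hk
        · simp
        · exact (hS u _ (by omega)).trans (le_max_right _ _)
  have hT : ContractingWith c T := by
    refine ⟨hc, LipschitzWith.of_dist_le_mul fun u v => (dist_le (by positivity)).2 fun k => ?_⟩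
    simp only [T, coe_ofNormedAddCommGroupDiscrete]
    split_ifs with hk
    · simp only [dist_self]
      positivity
    · rw [dist_eq_norm, hS_sub, dist_eq_norm u v]
      exact hS _ _ (by omega)
  set u := ContractingWith.fixedPoint T hT
  have hu : ∀ k, (if k ≤ N then 1 else S u (k - 1)) = u k := fun k =>
    DFunLike.congr_fun (ContractingWith.fixedPoint_isFixedPt (f := T) hT) k
  refine ⟨u, by simpa using (hu N).symm, ⟨‖u‖, u.norm_coe_le_norm⟩, fun k hk => ?_⟩
  have hk₁ := hu (k + 1)
  rw [if_neg (by omega), add_tsub_cancel_right] at hk₁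
  rcases eq_or_ne (g (k + 1)) 0 with hg | hg
  · have := hcoef k hk
    rw [hg, norm_zero, mul_zero] at this
    have hf : f (k + 1) = 0 := norm_le_zero_iff.1 (by linarith [norm_nonneg (h (k + 1))])
    have hh : h (k + 1) = 0 := norm_le_zero_iff.1 (by linarith [norm_nonneg (f (k + 1))])
    simp [hf, hg, hh]
  · rw [← hk₁]
    simp only [S]
    field_simp
    ring

theorem exists_isThreeTermSolution_bounded (hf : ∀ k, f k ≠ 0) {c : NNReal} (hc : c < 1)
    {N : ℕ} (hcoef : ∀ k ≥ N, ‖f (k + 1)‖ + ‖h (k + 1)‖ ≤ c * ‖g (k + 1)‖) :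
    ∃ a, IsThreeTermSolution f g h a ∧ a N = 1 ∧ ∃ M, ∀ k ≥ N, ‖a k‖ ≤ M := by
  obtain ⟨u, huN, ⟨M, hM⟩, hu⟩ := exists_bounded_tail_solution hc N hcoef
  refine ⟨extendBackward f g h N u, isThreeTermSolution_extendBackward hf hu, ?_, M, fun k hk => ?_⟩
  · rw [extendBackward_of_le le_rfl, huN]
  · rw [extendBackward_of_le hk]
    exact hM k

end Complete

theorem eq_zero_of_norm_le_norm_succ_of_tendsto {E : Type*} [NormedAddCommGroup E] {x : ℕ → E}
    {K : ℕ} (hx : ∀ k ≥ K, ‖x k‖ ≤ ‖x (k + 1)‖) (hlim : Tendsto x atTop (𝓝 0)) : x K = 0 := by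
  refine norm_le_zero_iff.1 (ge_of_tendsto (by simpa using hlim.norm) ?_)
  filter_upwards [eventually_ge_atTop K] with n hn
  exact monotoneOn_nat_Ici_of_le_succ hx (le_refl K) hn hn

theorem IsThreeTermSolution.norm_succ_le_mul_norm (he : IsThreeTermSolution f g h e) {k : ℕ}
    {ρ : ℝ} (hh : h (k + 1) ≠ 0) (hρ : ρ ≤ 1)
    (hcoef : ‖f (k + 1)‖ + ‖h (k + 1)‖ ≤ ρ * ‖g (k + 1)‖) (hk : ‖e k‖ ≤ ‖e (k + 1)‖) :
    ‖e (k + 1)‖ ≤ ρ * ‖e (k + 2)‖ := by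
  have hh' : 0 < ‖h (k + 1)‖ := norm_pos_iff.2 hh
  have hρ₀ : 0 ≤ ρ := by
    by_contra! hρ₀
    nlinarith [norm_nonneg (f (k + 1)), norm_nonneg (g (k + 1))]
  have hrec : h (k + 1) * e (k + 2) = -(g (k + 1) * e (k + 1) + f (k + 1) * e k) := by
    linear_combination he k
  have hrev : ‖g (k + 1)‖ * ‖e (k + 1)‖ - ‖f (k + 1)‖ * ‖e k‖ ≤ ‖h (k + 1)‖ * ‖e (k + 2)‖ := by
    rw [← norm_mul, ← norm_mul, ← norm_mul, hrec, norm_neg]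
    exact norm_sub_le_norm_add _ _
  refine le_of_mul_le_mul_left ?_ hh'
  calc ‖h (k + 1)‖ * ‖e (k + 1)‖
      ≤ (ρ * ‖g (k + 1)‖ - ‖f (k + 1)‖) * ‖e (k + 1)‖ := by gcongr; linarith
    _ ≤ ρ * (‖g (k + 1)‖ * ‖e (k + 1)‖ - ‖f (k + 1)‖ * ‖e k‖) := by
        have : ρ * ‖e k‖ ≤ ‖e (k + 1)‖ := by nlinarith [norm_nonneg (e k)]
        nlinarith [mul_le_mul_of_nonneg_left this (norm_nonneg (f (k + 1)))]
    _ ≤ ‖h (k + 1)‖ * (ρ * ‖e (k + 2)‖) := by nlinarith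

theorem IsThreeTermSolution.norm_le_norm_succ (he : IsThreeTermSolution f g h e)
    (hh : ∀ k, h k ≠ 0) {N : ℕ} (hcoef : ∀ k ≥ N, ‖f (k + 1)‖ + ‖h (k + 1)‖ ≤ ‖g (k + 1)‖)
    (hN : ‖e N‖ ≤ ‖e (N + 1)‖) : ∀ k ≥ N, ‖e k‖ ≤ ‖e (k + 1)‖ :=
  Nat.le_induction hN fun k hk ih => by
    simpa using he.norm_succ_le_mul_norm (hh _) le_rfl (by simpa using hcoef k hk) ih

theorem IsThreeTermSolution.eq_zero_of_tendsto_mul_pow (he : IsThreeTermSolution f g h e)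
    (hf : ∀ k, f k ≠ 0) (hh : ∀ k, h k ≠ 0) (hfo : f =o[atTop] g) (hho : h =o[atTop] g)
    {N : ℕ} (hcoef : ∀ k ≥ N, ‖f (k + 1)‖ + ‖h (k + 1)‖ ≤ ‖g (k + 1)‖) (hN : e N = 0)
    {z : 𝕜} (hz : z ≠ 0) (hlim : Tendsto (fun k => e k * z ^ k) atTop (𝓝 0)) : e = 0 := by
  have hmono := he.norm_le_norm_succ hh hcoef (by simp [hN])
  obtain ⟨K, hKN, hK⟩ := exists_ge_forall_norm_add_norm_le hfo hho
    (lt_min (norm_pos_iff.2 hz) one_pos) N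
  have hgrow : ∀ k ≥ K + 1, ‖e k * z ^ k‖ ≤ ‖e (k + 1) * z ^ (k + 1)‖ := by
    intro k hk
    obtain ⟨i, rfl⟩ : ∃ i, k = i + 1 := ⟨k - 1, by omega⟩
    have hi := he.norm_succ_le_mul_norm (hh _) (min_le_right _ _) (hK i (by omega))
      (hmono i (by omega))
    rw [norm_mul, norm_mul, norm_pow, norm_pow, pow_succ _ (i + 1)]
    calc ‖e (i + 1)‖ * ‖z‖ ^ (i + 1)
        ≤ ‖z‖ * ‖e (i + 2)‖ * ‖z‖ ^ (i + 1) := by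
          gcongr
          exact hi.trans (by gcongr; exact min_le_left _ _)
      _ = ‖e (i + 1 + 1)‖ * (‖z‖ ^ (i + 1) * ‖z‖) := by ring
  have hK₁ : e (K + 1) = 0 := by
    simpa [hz] using eq_zero_of_norm_le_norm_succ_of_tendsto hgrow hlim
  have hN₁ : e (N + 1) = 0 := by
    simpa [hK₁] using monotoneOn_nat_Ici_of_le_succ hmono (show N ≤ N + 1 by omega)
      (show N ≤ K + 1 by omega) (by omega)
  exact he.eq_zero_of_apply_of_apply_succ hf hh hN hN₁

end Normed

/-- Existence and uniqueness (up to a constant factor) of an everywhere-converging power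
series solution of a three-term recurrence `f k * a (k-1) + g k * a k + h k * a (k+1) = 0`
(for `k ≥ 1`) with `f k, h k ≠ 0` and `f k = o(g k)`, `h k = o(g k)` as `k → ∞`. -/
theorem three_term_recurrence_converging_solution
    (f g h : ℕ → ℂ)
    (hf : ∀ k, f k ≠ 0) (hh : ∀ k, h k ≠ 0)
    (hg : ∃ N : ℕ, ∀ k ≥ N, g k ≠ 0)
    (hfg : Tendsto (fun k => f k / g k) atTop (nhds 0))
    (hhg : Tendsto (fun k => h k / g k) atTop (nhds 0)) :
    ∃ a : ℕ → ℂ, a ≠ 0 ∧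
      (∀ k : ℕ, f (k + 1) * a k + g (k + 1) * a (k + 1) + h (k + 1) * a (k + 2) = 0) ∧
      (∀ z : ℂ, Summable fun k => a k * z ^ k) ∧
      ∀ a' : ℕ → ℂ,
        (∀ k : ℕ, f (k + 1) * a' k + g (k + 1) * a' (k + 1) + h (k + 1) * a' (k + 2) = 0) →
        (∃ z : ℂ, z ≠ 0 ∧ Summable fun k => a' k * z ^ k) →
        ∃ c : ℂ, ∀ k, a' k = c * a k := by
  have hg' : ∀ᶠ k in atTop, g k = 0 → f k = 0 ∧ h k = 0 :=
    (eventually_atTop.2 hg).mono fun k hk hk' => absurd hk' hk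
  have hfo : f =o[atTop] g :=
    (Asymptotics.isLittleO_iff_tendsto' (hg'.mono fun k hk hk' => (hk hk').1)).2 hfg
  have hho : h =o[atTop] g :=
    (Asymptotics.isLittleO_iff_tendsto' (hg'.mono fun k hk hk' => (hk hk').2)).2 hhg
  obtain ⟨N, -, hN⟩ := exists_ge_forall_norm_add_norm_le hfo hho (ρ := ((2⁻¹ : NNReal) : ℝ))
    (by norm_num) 0
  obtain ⟨a, ha, haN, M, hM⟩ := exists_isThreeTermSolution_bounded hf (by norm_num) hN
  have hsum := ha.summable_mul_pow hh hfo hho hM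
  refine ⟨a, fun h0 => by simp [h0] at haN, ha, hsum, fun a' ha' ⟨z, hz, hz'⟩ => ⟨a' N, fun k => ?_⟩⟩
  have he : IsThreeTermSolution f g h (a' - a' N • a) := fun k => by
    simp only [Pi.sub_apply, Pi.smul_apply, smul_eq_mul]
    linear_combination ha' k - a' N * ha k
  have he₀ := he.eq_zero_of_tendsto_mul_pow hf hh hfo hho
    (fun k hk => (hN k hk).trans (mul_le_of_le_one_left (norm_nonneg _) (by norm_num)))
    (by simp [haN]) hz
    (by simpa [sub_mul, mul_assoc] using (hz'.sub ((hsum z).mul_left (a' N))).tendsto_atTop_zero)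
  simpa [sub_eq_zero] using congrFun he₀ k
end

section
/- Let n, λ, μ, b ∈ ℂ with μ ≠ 0, and let k₀ ∈ ℤ be such that k + b + n − 1 ≠ 0 and k + b + 1 ≠ 0 for every integer k > k₀. Then there exists a sequence (a_k)_{k≥k₀} of complex numbers, not identically zero, satisfying the Heun recurrence ((k+b)(k+b+n−1) + λ)a_k − μ(k+b+n−1)a_{k−1} + μ(k+b+1)a_{k+1} = 0 at every integer k > k₀, such that the power series ∑_{k≥k₀} a_k z^{k−k₀} has infinite radius of convergence; and it is unique up to a constant factor: any sequence (a'_k)_{k≥k₀} satisfying the same recurrence at every k > k₀ and such that ∑_{k≥k₀} a'_k z^{k−k₀} has positive (possibly infinite) radius of convergence is of the form a'_k = c·a_k for some c ∈ ℂ. -/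
/-!
Write the recurrence as `p m * a m + q m * a (m + 1) + r m * a (m + 2) = 0`, where `q m ~ m²`
while `p m` and `r m` grow linearly. After the substitution `a m = t ^ m / m ! * u m` the tail of
the recurrence is diagonally dominant, so solving it for `u (m + 1)` is a contraction on bounded
sequences. Its fixed point, continued backwards through `p m ≠ 0`, is a solution with
`a m = O(t ^ m / m !)`, hence entire.

For uniqueness, the Casoratian `W m = a m * a' (m + 1) - a (m + 1) * a' m` of two solutions obeys
`r m * W (m + 1) = p m * W m`, and `r = O(p)`, so `W` decays at most geometrically. If `a` is entire
and `a'` has a positive radius of convergence, `W m * y ^ m → 0` for every `y`; hence `W = 0`,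
and `a'` is a multiple of `a`.
-/

open Filter Topology

/-- The Heun recurrence with parameters `n, λ, μ, b` at index `k`, relating consecutive
coefficients `x = a (k-1)`, `y = a k`, `z = a (k+1)`:
`((k+b)(k+b+n-1) + λ) a k - μ (k+b+n-1) a (k-1) + μ (k+b+1) a (k+1) = 0`. -/
def HeunRec (n lam mu b : ℂ) (x y z k : ℂ) : Prop :=
  ((k + b) * (k + b + n - 1) + lam) * y - mu * (k + b + n - 1) * x + mu * (k + b + 1) * z = 0

open Asymptotics NNReal BoundedContinuousFunction
open scoped Nat

def ThreeTermRec {R : Type*} [Semiring R] (p q r a : ℕ → R) : Prop :=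
  ∀ m, p m * a m + q m * a (m + 1) + r m * a (m + 2) = 0

def casoratian {R : Type*} [CommRing R] (a b : ℕ → R) (m : ℕ) : R :=
  a m * b (m + 1) - a (m + 1) * b m

theorem pow_div_factorial_succ (t : ℝ) (m : ℕ) :
    t ^ (m + 1) / (m + 1)! = t ^ m / m ! * (t / (m + 1)) := by
  rw [Nat.factorial_succ, pow_succ]; push_cast; field_simp

theorem summable_mul_pow_of_isBigO {𝕜 : Type*} [RCLike 𝕜] {a : ℕ → 𝕜} {t : ℝ}
    (ha : a =O[atTop] fun m => t ^ m / m !) (z : 𝕜) : Summable fun m => a m * z ^ m := by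
  refine summable_of_isBigO_nat (Real.summable_pow_div_factorial (t * ‖z‖)) ?_
  have hz : (fun m : ℕ => z ^ m) =O[atTop] fun m => ‖z‖ ^ m := by
    simpa only [norm_pow] using (isBigO_refl (fun m : ℕ => z ^ m) atTop).norm_right
  refine (ha.mul hz).congr_right fun m => ?_
  rw [mul_pow]; ring

theorem tendsto_casoratian_mul_pow {𝕜 : Type*} [NormedField 𝕜] {a b : ℕ → 𝕜}
    (ha : ∀ z, Summable fun m => a m * z ^ m) {z : 𝕜} (hz : z ≠ 0)
    (hb : Summable fun m => b m * z ^ m) {y : 𝕜} (hy : y ≠ 0) :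
    Tendsto (fun m => casoratian a b m * y ^ m) atTop (𝓝 0) := by
  have ha0 := (ha (y / z)).tendsto_atTop_zero
  have hb0 := hb.tendsto_atTop_zero
  have ha1 := ha0.comp (tendsto_add_atTop_nat 1)
  have hb1 := hb0.comp (tendsto_add_atTop_nat 1)
  have h := ((ha0.mul hb1).mul_const z⁻¹).sub ((ha1.mul hb0).mul_const (y / z)⁻¹)
  simp only [mul_zero, zero_mul, sub_zero] at h
  refine h.congr fun m => ?_
  simp only [Function.comp_apply, casoratian, div_pow, pow_succ]
  field_simp

theorem eq_zero_of_norm_le_mul_norm_succ {𝕜 : Type*} [NormedField 𝕜] {W : ℕ → 𝕜} {y : 𝕜}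
    {K : ℕ} (hy : y ≠ 0) (hW : ∀ m ≥ K, ‖W m‖ ≤ ‖y‖ * ‖W (m + 1)‖)
    (hdecay : Tendsto (fun m => W m * y ^ m) atTop (𝓝 0)) : W K = 0 := by
  have hmono : Monotone fun j => ‖W (j + K) * y ^ (j + K)‖ := monotone_nat_of_le_succ fun j => by
    rw [norm_mul, norm_mul, norm_pow, norm_pow, Nat.add_right_comm, pow_succ]
    calc ‖W (j + K)‖ * ‖y‖ ^ (j + K) ≤ ‖y‖ * ‖W (j + K + 1)‖ * ‖y‖ ^ (j + K) := by
          gcongr; exact hW _ (Nat.le_add_left K j)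
      _ = ‖W (j + K + 1)‖ * (‖y‖ ^ (j + K) * ‖y‖) := by ring
  have h := hmono.ge_of_tendsto ((tendsto_add_atTop_iff_nat K).2 hdecay).norm 0
  rw [norm_zero, zero_add, norm_le_zero_iff, mul_eq_zero] at h
  exact h.resolve_right (pow_ne_zero K hy)

section NatCast

variable {𝕜 : Type*} [RCLike 𝕜]

theorem isLittleO_const_natCast (w : 𝕜) : (fun _ : ℕ => w) =o[atTop] fun m => (m : 𝕜) :=
  isLittleO_const_left.2 <| Or.inr <| by
    simpa [Function.comp_def] using tendsto_natCast_atTop_atTop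

theorem isLittleO_natCast_mul_self :
    (fun m : ℕ => (m : 𝕜)) =o[atTop] fun m => (m : 𝕜) * m := by
  simpa using (isBigO_refl (fun m : ℕ => (m : 𝕜)) atTop).mul_isLittleO (isLittleO_const_natCast 1)

theorem isEquivalent_natCast_add (w : 𝕜) :
    (fun m : ℕ => (m : 𝕜) + w) ~[atTop] fun m => (m : 𝕜) := by
  simpa [IsEquivalent, Pi.sub_def] using isLittleO_const_natCast w

theorem isEquivalent_const_mul_natCast_add (c w : 𝕜) :
    (fun m : ℕ => c * ((m : 𝕜) + w)) ~[atTop] fun m => c * m :=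
  (IsEquivalent.refl (u := fun _ => c)).mul (isEquivalent_natCast_add w)

end NatCast

namespace ThreeTermRec

section CommRing

variable {R : Type*} [CommRing R] {p q r a b : ℕ → R}

theorem zero : ThreeTermRec p q r 0 := fun m => by simp

theorem const_mul (ha : ThreeTermRec p q r a) (c : R) :
    ThreeTermRec p q r fun m => c * a m :=
  fun m => by linear_combination c * ha m

theorem casoratian_succ (ha : ThreeTermRec p q r a) (hb : ThreeTermRec p q r b) (m : ℕ) :
    r m * casoratian a b (m + 1) = p m * casoratian a b m := by
  unfold casoratian
  linear_combination a (m + 1) * hb m - b (m + 1) * ha m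

variable [IsDomain R]

theorem ext (hr : ∀ m, r m ≠ 0) (ha : ThreeTermRec p q r a) (hb : ThreeTermRec p q r b)
    (h0 : a 0 = b 0) (h1 : a 1 = b 1) : a = b := by
  have key : ∀ m, a m = b m ∧ a (m + 1) = b (m + 1) := by
    intro m
    induction m with
    | zero => exact ⟨h0, h1⟩
    | succ m ih =>
      refine ⟨ih.2, mul_left_cancel₀ (hr m) ?_⟩
      linear_combination ha m - hb m - p m * ih.1 - q m * ih.2
  exact funext fun m => (key m).1

theorem casoratian_zero_eq_zero (hp : ∀ m, p m ≠ 0) (ha : ThreeTermRec p q r a)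
    (hb : ThreeTermRec p q r b) {m : ℕ} (hm : casoratian a b m = 0) : casoratian a b 0 = 0 := by
  induction m with
  | zero => exact hm
  | succ m ih =>
    refine ih ((mul_eq_zero.1 ?_).resolve_left (hp m))
    rw [← casoratian_succ ha hb, hm, mul_zero]

end CommRing

section Field

variable {F : Type*} [Field F] {p q r a b : ℕ → F}

theorem exists_eq_const_mul_of_casoratian_eq_zero (hr : ∀ m, r m ≠ 0)
    (ha : ThreeTermRec p q r a) (hb : ThreeTermRec p q r b) (ha0 : a ≠ 0)
    (hW : casoratian a b 0 = 0) : ∃ c, ∀ m, b m = c * a m := by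
  unfold casoratian at hW
  have hc : ∀ c, b 0 = c * a 0 → b 1 = c * a 1 → ∃ c, ∀ m, b m = c * a m := fun c h0 h1 =>
    ⟨c, congrFun (hb.ext hr (ha.const_mul c) h0 h1)⟩
  by_cases h0 : a 0 = 0
  · have h1 : a 1 ≠ 0 := fun h1 => ha0 (ha.ext hr zero h0 h1)
    refine hc (b 1 / a 1) ?_ (by field_simp)
    rw [h0, zero_mul, zero_sub, neg_eq_zero] at hW
    rw [h0, mul_zero]
    exact (mul_eq_zero.1 hW).resolve_left h1
  · refine hc (b 0 / a 0) (by field_simp) ?_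
    field_simp
    linear_combination hW

theorem exists_of_shift (hp : ∀ m, p m ≠ 0) (K : ℕ) {w : ℕ → F}
    (hw : ThreeTermRec (fun j => p (K + j)) (fun j => q (K + j)) (fun j => r (K + j)) w) :
    ∃ a, ThreeTermRec p q r a ∧ ∀ j, a (K + j) = w j := by
  induction K generalizing w with
  | zero => exact ⟨w, by simpa using hw, by simp⟩
  | succ K ih =>
    let w' : ℕ → F := fun
      | 0 => -(q K * w 0 + r K * w 1) / p K
      | j + 1 => w j
    obtain ⟨a, ha, haw⟩ := ih (w := w') fun
      | 0 => by
        show p K * w' 0 + q K * w 0 + r K * w 1 = 0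
        simp only [w']
        field_simp [hp K]
        ring
      | j + 1 => by
        show p (K + (j + 1)) * w j + q (K + (j + 1)) * w (j + 1) + r (K + (j + 1)) * w (j + 2) = 0
        rw [show K + (j + 1) = K + 1 + j by omega]
        exact hw j
    exact ⟨a, ha, fun j => by simpa only [w', Nat.succ_add_eq_add_succ] using haw (j + 1)⟩

end Field

section Dominant

variable {𝕜 : Type*} [NormedField 𝕜] {p q r : ℕ → 𝕜} {ρ : ℝ≥0}

theorem norm_div_le_of_dominant {p q r x y : 𝕜} {d : ℝ} (hdom : ‖p‖ + ‖r‖ ≤ ρ * ‖q‖)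
    (hx : ‖x‖ ≤ d) (hy : ‖y‖ ≤ d) : ‖(p * x + r * y) / q‖ ≤ ρ * d := by
  have hd : 0 ≤ d := (norm_nonneg x).trans hx
  rw [norm_div]
  refine div_le_of_le_mul₀ (norm_nonneg q) (by positivity) ?_
  calc ‖p * x + r * y‖ ≤ ‖p‖ * d + ‖r‖ * d := by
        grw [norm_add_le, norm_mul, norm_mul, hx, hy]
    _ = (‖p‖ + ‖r‖) * d := by ring
    _ ≤ ρ * ‖q‖ * d := by gcongr
    _ = ρ * d * ‖q‖ := by ring

/-- The recurrence at `m` solved for `u (m + 1)`. Where `q m = 0`, dominance forces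
`p m = r m = 0`, so the junk value of `/ 0` does no harm. -/
def forwardStep (p q r : ℕ → 𝕜) (u : ℕ → 𝕜) : ℕ → 𝕜
  | 0 => 1
  | m + 1 => -(p m * u m + r m * u (m + 2)) / q m

theorem norm_forwardStep_le (hdom : ∀ m, ‖p m‖ + ‖r m‖ ≤ ρ * ‖q m‖) (u : ℕ →ᵇ 𝕜) (m : ℕ) :
    ‖forwardStep p q r u m‖ ≤ 1 + ρ * ‖u‖ := by
  cases m with
  | zero =>
    rw [forwardStep, norm_one]
    exact le_add_of_nonneg_right (by positivity)
  | succ m =>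
    rw [forwardStep, neg_div, norm_neg]
    exact (norm_div_le_of_dominant (hdom m) (u.norm_coe_le_norm _) (u.norm_coe_le_norm _)).trans
      (le_add_of_nonneg_left zero_le_one)

theorem norm_forwardStep_sub_le (hdom : ∀ m, ‖p m‖ + ‖r m‖ ≤ ρ * ‖q m‖) (u v : ℕ →ᵇ 𝕜)
    (m : ℕ) : ‖forwardStep p q r u m - forwardStep p q r v m‖ ≤ ρ * dist u v := by
  cases m with
  | zero => simp only [forwardStep, sub_self, norm_zero]; positivity
  | succ m =>
    have h : forwardStep p q r u (m + 1) - forwardStep p q r v (m + 1) =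
        -((p m * (u m - v m) + r m * (u (m + 2) - v (m + 2))) / q m) := by
      simp only [forwardStep]; ring
    rw [h, norm_neg]
    exact norm_div_le_of_dominant (hdom m) (dist_eq_norm (u m) (v m) ▸ u.dist_coe_le_dist m)
      (dist_eq_norm (u (m + 2)) _ ▸ u.dist_coe_le_dist (m + 2))

theorem exists_bounded_of_dominant [CompleteSpace 𝕜] (hρ : ρ < 1)
    (hdom : ∀ m, ‖p m‖ + ‖r m‖ ≤ ρ * ‖q m‖) :
    ∃ u : ℕ →ᵇ 𝕜, u 0 = 1 ∧ ThreeTermRec p q r u := by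
  let T : (ℕ →ᵇ 𝕜) → ℕ →ᵇ 𝕜 := fun u => .ofNormedAddCommGroup (forwardStep p q r u)
    continuous_of_discreteTopology _ (norm_forwardStep_le hdom u)
  have hT : ContractingWith ρ T := ⟨hρ, LipschitzWith.of_dist_le_mul fun u v =>
    (BoundedContinuousFunction.dist_le (by positivity)).2 fun m => by
      simpa [dist_eq_norm, T] using norm_forwardStep_sub_le hdom u v m⟩
  set u := ContractingWith.fixedPoint T hT
  have hu : ∀ m, forwardStep p q r u m = u m := fun m =>
    DFunLike.congr_fun (ContractingWith.fixedPoint_isFixedPt hT) m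
  refine ⟨u, (hu 0).symm, fun m => ?_⟩
  rw [← hu (m + 1), forwardStep]
  by_cases hq : q m = 0
  · have hpr : ‖p m‖ + ‖r m‖ ≤ 0 := by simpa [hq] using hdom m
    have hp : p m = 0 := norm_le_zero_iff.1 (by linarith [norm_nonneg (r m)])
    have hr : r m = 0 := norm_le_zero_iff.1 (by linarith [norm_nonneg (p m)])
    simp [hp, hq, hr]
  · field_simp
    ring

end Dominant

section Entire

variable {𝕜 : Type*} [RCLike 𝕜] {p q r : ℕ → 𝕜}

theorem eventually_dominant_of_isBigO (hpq : (fun m : ℕ => (m : 𝕜) * p m) =O[atTop] q)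
    (hrq : r =o[atTop] q) : ∃ t > 0, ∀ᶠ m in atTop,
      ‖p m‖ * (t ^ m / m !) + ‖r m‖ * (t ^ (m + 2) / (m + 2)!) ≤
        (1 / 2 : ℝ≥0) * (‖q m‖ * (t ^ (m + 1) / (m + 1)!)) := by
  obtain ⟨C, hC, hCb⟩ := hpq.exists_pos
  refine ⟨8 * C, by positivity, ?_⟩
  filter_upwards [hCb.bound, hrq.def (c := 1 / (16 * C)) (by positivity), eventually_ge_atTop 1]
    with m hp hr hm
  rw [norm_mul, RCLike.norm_natCast] at hp
  have hm : (1 : ℝ) ≤ m := by exact_mod_cast hm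
  set t := 8 * C
  set S := (t ^ m / m !)
  have hp' : ‖p m‖ ≤ 1 / 4 * ‖q m‖ * (t / (m + 1)) := by
    rw [mul_div_assoc', le_div_iff₀ (by positivity)]
    nlinarith [norm_nonneg (p m)]
  have hr' : ‖r m‖ * (t / (m + 2)) ≤ 1 / 4 * ‖q m‖ := by
    have : ‖r m‖ * t ≤ 1 / 2 * ‖q m‖ := by
      calc ‖r m‖ * t ≤ 1 / (16 * C) * ‖q m‖ * t := by gcongr
        _ = 1 / 2 * ‖q m‖ := by field_simp; ring
    rw [mul_div_assoc', div_le_iff₀ (by positivity)]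
    nlinarith [norm_nonneg (q m)]
  rw [show m + 2 = m + 1 + 1 by rfl, pow_div_factorial_succ, pow_div_factorial_succ]
  push_cast
  calc ‖p m‖ * S + ‖r m‖ * (S * (t / (m + 1)) * (t / (m + 1 + 1)))
      = S * ‖p m‖ + S * (t / (m + 1)) * (‖r m‖ * (t / (m + 2))) := by ring
    _ ≤ S * (1 / 4 * ‖q m‖ * (t / (m + 1))) + S * (t / (m + 1)) * (1 / 4 * ‖q m‖) := by
      gcongr
    _ = 1 / 2 * (‖q m‖ * (S * (t / (m + 1)))) := by ring

theorem exists_summable (hp : ∀ m, p m ≠ 0) (hpq : (fun m : ℕ => (m : 𝕜) * p m) =O[atTop] q)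
    (hrq : r =o[atTop] q) :
    ∃ a, a ≠ 0 ∧ ThreeTermRec p q r a ∧ ∀ z, Summable fun m => a m * z ^ m := by
  obtain ⟨t, ht, hdom⟩ := eventually_dominant_of_isBigO hpq hrq
  obtain ⟨K, hK⟩ := eventually_atTop.1 hdom
  set s : ℕ → 𝕜 := fun m => ((t ^ m / m ! : ℝ) : 𝕜)
  have hs : ∀ m, ‖s m‖ = t ^ m / m ! := fun m => by
    simp only [s, RCLike.norm_ofReal, abs_of_nonneg (by positivity : 0 ≤ t ^ m / m !)]
  obtain ⟨u, hu0, hu⟩ := exists_bounded_of_dominant (p := fun j => p (K + j) * s (K + j))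
    (q := fun j => q (K + j) * s (K + j + 1)) (r := fun j => r (K + j) * s (K + j + 2))
    (ρ := 1 / 2) (by norm_num) fun j => by
      simpa only [norm_mul, hs] using hK (K + j) (Nat.le_add_right K j)
  obtain ⟨a, ha, haK⟩ := exists_of_shift (q := q) (r := r) hp K (w := fun j => s (K + j) * u j)
    fun j => by linear_combination hu j
  refine ⟨a, fun h => ?_, ha, summable_mul_pow_of_isBigO (t := t) ?_⟩
  · have hsK : s K ≠ 0 := norm_pos_iff.1 (by rw [hs]; positivity)
    exact hsK (by simpa [h, hu0] using (haK 0).symm)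
  · refine IsBigO.of_bound ‖u‖ (eventually_atTop.2 ⟨K, fun m hm => ?_⟩)
    obtain ⟨j, rfl⟩ := Nat.exists_eq_add_of_le hm
    rw [haK j, norm_mul, hs, Real.norm_of_nonneg (by positivity), mul_comm]
    exact mul_le_mul_of_nonneg_right (u.norm_coe_le_norm j) (by positivity)

end Entire

theorem norm_casoratian_le {𝕜 : Type*} [NormedField 𝕜] {p q r a b : ℕ → 𝕜}
    (ha : ThreeTermRec p q r a) (hb : ThreeTermRec p q r b) {m : ℕ} (hr : r m ≠ 0) {c : ℝ}
    (hc : ‖r m‖ ≤ c * ‖p m‖) : ‖casoratian a b m‖ ≤ c * ‖casoratian a b (m + 1)‖ := by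
  have h := congrArg norm (ha.casoratian_succ hb m)
  rw [norm_mul, norm_mul] at h
  refine le_of_mul_le_mul_left ?_ (norm_pos_iff.2 hr)
  calc ‖r m‖ * ‖casoratian a b m‖ ≤ c * ‖p m‖ * ‖casoratian a b m‖ := by gcongr
    _ = ‖r m‖ * (c * ‖casoratian a b (m + 1)‖) := by rw [mul_assoc, ← h]; ring

theorem exists_eq_const_mul_of_summable {𝕜 : Type*} [NontriviallyNormedField 𝕜]
    {p q r a b : ℕ → 𝕜} (hp : ∀ m, p m ≠ 0) (hr : ∀ m, r m ≠ 0) (hrp : r =O[atTop] p)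
    (ha : ThreeTermRec p q r a) (ha0 : a ≠ 0) (hent : ∀ z, Summable fun m => a m * z ^ m)
    (hb : ThreeTermRec p q r b) {z : 𝕜} (hz : z ≠ 0) (hbz : Summable fun m => b m * z ^ m) :
    ∃ c, ∀ m, b m = c * a m := by
  obtain ⟨c, hc⟩ := hrp.bound
  obtain ⟨K, hK⟩ := eventually_atTop.1 hc
  obtain ⟨y, hy⟩ := NormedField.exists_lt_norm 𝕜 (max c 0)
  have hy0 : y ≠ 0 := norm_pos_iff.1 ((le_max_right _ _).trans_lt hy)
  refine ha.exists_eq_const_mul_of_casoratian_eq_zero hr hb ha0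
    (ha.casoratian_zero_eq_zero hp hb (m := K) ?_)
  refine eq_zero_of_norm_le_mul_norm_succ hy0 (fun m hm => ?_)
    (tendsto_casoratian_mul_pow hent hz hbz hy0)
  exact (norm_casoratian_le ha hb (hr m) (hK m hm)).trans
    (by gcongr; exact (le_max_left _ _).trans hy.le)

end ThreeTermRec

-- The coefficients of `a_{k-1}`, `a_k`, `a_{k+1}` in the Heun recurrence at `k = k0 + m + 1`.
def heunCoeffPrev (n mu b : ℂ) (k0 : ℤ) (m : ℕ) : ℂ := -mu * (m + (k0 + b + n))

def heunCoeffCurr (n lam b : ℂ) (k0 : ℤ) (m : ℕ) : ℂ :=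
  (m + (k0 + b + 1)) * (m + (k0 + b + n)) + lam

def heunCoeffNext (mu b : ℂ) (k0 : ℤ) (m : ℕ) : ℂ := mu * (m + (k0 + b + 2))

section Heun

variable (n lam mu b : ℂ) (k0 : ℤ)

theorem forall_heunRec_iff (a : ℕ → ℂ) :
    (∀ m : ℕ, HeunRec n lam mu b (a m) (a (m + 1)) (a (m + 2)) ((k0 : ℂ) + m + 1)) ↔
      ThreeTermRec (heunCoeffPrev n mu b k0) (heunCoeffCurr n lam b k0) (heunCoeffNext mu b k0)
        a := by
  refine forall_congr' fun m => ?_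
  unfold HeunRec heunCoeffPrev heunCoeffCurr heunCoeffNext
  constructor <;> intro h <;> linear_combination h

theorem heunCoeffCurr_isEquivalent : heunCoeffCurr n lam b k0 ~[atTop] fun m => (m : ℂ) * m :=
  ((isEquivalent_natCast_add _).mul (isEquivalent_natCast_add _)).add_isLittleO
    ((isLittleO_const_natCast lam).trans isLittleO_natCast_mul_self)

theorem heunCoeffPrev_isBigO : heunCoeffPrev n mu b k0 =O[atTop] fun m => (m : ℂ) :=
  (isEquivalent_const_mul_natCast_add _ _).isBigO.trans (isBigO_const_mul_self (-mu) _ _)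

theorem isBigO_heunCoeffPrev {mu : ℂ} (hmu : mu ≠ 0) :
    (fun m : ℕ => (m : ℂ)) =O[atTop] heunCoeffPrev n mu b k0 :=
  (isBigO_self_const_mul (neg_ne_zero.2 hmu) _ _).trans
    (isEquivalent_const_mul_natCast_add _ _).symm.isBigO

theorem heunCoeffNext_isBigO : heunCoeffNext mu b k0 =O[atTop] fun m => (m : ℂ) :=
  (isEquivalent_const_mul_natCast_add _ _).isBigO.trans (isBigO_const_mul_self mu _ _)

end Heun

/-- Forward solutions: for `μ ≠ 0` and `k₀ ∈ ℤ` with `k + b + n - 1 ≠ 0` and `k + b + 1 ≠ 0`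
for all `k > k₀`, there is a sequence `(a_k)_{k ≥ k₀}` (encoded as `a m = a_{k₀+m}`),
unique up to a constant factor, not identically zero, satisfying the Heun recurrence at every
`k > k₀` and such that `∑_{k ≥ k₀} a_k z^(k-k₀)` has infinite radius of convergence. -/
theorem heun_forward_solution
    (n lam mu b : ℂ) (hmu : mu ≠ 0) (k0 : ℤ)
    (hk : ∀ k : ℤ, k0 < k → ((k : ℂ) + b + n - 1 ≠ 0 ∧ (k : ℂ) + b + 1 ≠ 0)) :
    ∃ a : ℕ → ℂ, a ≠ 0 ∧
      (∀ m : ℕ, HeunRec n lam mu b (a m) (a (m + 1)) (a (m + 2)) ((k0 : ℂ) + m + 1)) ∧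
      (∀ z : ℂ, Summable fun m => a m * z ^ m) ∧
      ∀ a' : ℕ → ℂ,
        (∀ m : ℕ, HeunRec n lam mu b (a' m) (a' (m + 1)) (a' (m + 2)) ((k0 : ℂ) + m + 1)) →
        (∃ z : ℂ, z ≠ 0 ∧ Summable fun m => a' m * z ^ m) →
        ∃ c : ℂ, ∀ m, a' m = c * a m := by
  have hk' (m : ℕ) : (m + (k0 + b + n) : ℂ) ≠ 0 ∧ (m + (k0 + b + 2) : ℂ) ≠ 0 := by
    have h := hk (k0 + m + 1) (by omega)
    push_cast at h
    exact ⟨by convert h.1 using 1; ring, by convert h.2 using 1; ring⟩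
  have hP (m : ℕ) : heunCoeffPrev n mu b k0 m ≠ 0 := mul_ne_zero (neg_ne_zero.2 hmu) (hk' m).1
  have hR (m : ℕ) : heunCoeffNext mu b k0 m ≠ 0 := mul_ne_zero hmu (hk' m).2
  have hQ := (heunCoeffCurr_isEquivalent n lam b k0).symm.isBigO
  obtain ⟨a, ha0, ha, hent⟩ := ThreeTermRec.exists_summable hP
    (((isBigO_refl _ _).mul (heunCoeffPrev_isBigO n mu b k0)).trans hQ)
    ((heunCoeffNext_isBigO mu b k0).trans_isLittleO (isLittleO_natCast_mul_self.trans_isBigO hQ))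
  refine ⟨a, ha0, (forall_heunRec_iff n lam mu b k0 a).2 ha, hent, fun a' ha' ⟨z, hz, hz'⟩ => ?_⟩
  exact ThreeTermRec.exists_eq_const_mul_of_summable hP hR
    ((heunCoeffNext_isBigO mu b k0).trans (isBigO_heunCoeffPrev n b k0 hmu)) ha ha0 hent
    ((forall_heunRec_iff n lam mu b k0 a').1 ha') hz hz'
end

section
/- Let n, λ, μ, b ∈ ℂ with μ ≠ 0, and let k₀ ∈ ℤ be such that k + b + n − 1 ≠ 0 and k + b + 1 ≠ 0 for every integer k < k₀. Then there exists a sequence (a_k)_{k≤k₀} of complex numbers, not identically zero, satisfying the Heun recurrence ((k+b)(k+b+n−1) + λ)a_k − μ(k+b+n−1)a_{k−1} + μ(k+b+1)a_{k+1} = 0 at every integer k < k₀, such that the power series ∑_{m≥0} a_{k₀−m} w^m (in the variable w) has infinite radius of convergence (equivalently, ∑_{k≤k₀} a_k z^k converges for every z ≠ 0); and it is unique up to a constant factor: any sequence (a'_k)_{k≤k₀} satisfying the same recurrence at every k < k₀ such that ∑_{m≥0} a'_{k₀−m} w^m has positive (possibly infinite) radius of convergence is of the form a'_k = c·a_k for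 some c ∈ ℂ. -/
open Filter Topology

section HeunAux

open BoundedContinuousFunction

lemma quad_lemma (A c d : ℝ) (hA : 0 ≤ A) (hc : 0 ≤ c) (hd : 0 ≤ d) :
    ∃ M : ℕ, ∀ m : ℕ, M ≤ m → A ≤ (m : ℝ) ∧ c + d * ((m : ℝ) + A) ≤ ((m : ℝ) - A) ^ 2 := by
  refine ⟨⌈2*A + c + 2*d + 2*d*A + 2⌉₊, fun m hm => ?_⟩
  have h1 : 2*A + c + 2*d + 2*d*A + 2 ≤ (m : ℝ) :=
    le_trans (Nat.le_ceil _) (Nat.cast_le.mpr hm)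
  have hda : 0 ≤ 2*d*A := by positivity
  constructor
  · linarith
  · have hx1 : (0:ℝ) ≤ (m:ℝ) - A := by linarith
    have hx2 : (0:ℝ) ≤ (m:ℝ) - A - d - 1 := by linarith
    nlinarith [mul_nonneg hx1 hx2]

lemma heun_exists_t (c1 c2 c3 : ℕ → ℂ) (μ' A L : ℝ) (M : ℕ)
    (hμ' : 0 < μ') (hA : 0 < A)
    (hb1 : ∀ m : ℕ, ‖c1 m‖ ≤ μ' * ((m:ℝ) + A))
    (hb3 : ∀ m : ℕ, ‖c3 m‖ ≤ μ' * ((m:ℝ) + A))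
    (hc2 : ∀ m : ℕ, M ≤ m → L + 3 * μ' * ((m:ℝ) + A) ≤ ((m:ℝ) - A)^2 ∧
      ((m:ℝ) - A)^2 - L ≤ ‖c2 m‖) :
    ∃ t : ℕ → ℂ, (∀ m, ‖t m‖ ≤ 1) ∧
      ∀ m : ℕ, M ≤ m → t m = - c3 m / (c2 m - c1 m * t (m+1)) := by
  have hP : ∀ m : ℕ, 0 < μ' * ((m:ℝ) + A) := fun m =>
    mul_pos hμ' (add_pos_of_nonneg_of_pos (Nat.cast_nonneg m) hA)
  have hden : ∀ (u : ℕ → ℂ) (m : ℕ), M ≤ m → ‖u (m+1)‖ ≤ 1 →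
      2 * μ' * ((m:ℝ) + A) ≤ ‖c2 m - c1 m * u (m+1)‖ := by
    intro u m hm hu
    have h2 := (hc2 m hm).2
    have h1 := (hc2 m hm).1
    have hz : ‖c1 m * u (m+1)‖ ≤ μ' * ((m:ℝ) + A) := by
      rw [norm_mul]
      calc ‖c1 m‖ * ‖u (m+1)‖ ≤ (μ' * ((m:ℝ)+A)) * 1 :=
            mul_le_mul (hb1 m) hu (norm_nonneg _) (hP m).le
        _ = _ := mul_one _
    have h4 := norm_sub_norm_le (c2 m) (c1 m * u (m+1))
    linarith
  set X := BoundedContinuousFunction ℕ ℂ with hX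
  set S : Set X := {f | ‖f‖ ≤ 1} with hS
  have hSclosed : IsClosed S := isClosed_le continuous_norm continuous_const
  haveI : CompleteSpace S := hSclosed.completeSpace_coe
  haveI : Nonempty S := ⟨⟨0, by simp [hS]⟩⟩
  have hmem : ∀ (u : S) (m : ℕ), ‖(u : X) m‖ ≤ 1 := fun u m =>
    le_trans ((u : X).norm_coe_le_norm m) u.2
  set Tf : S → ℕ → ℂ :=
    fun u m => if M ≤ m then - c3 m / (c2 m - c1 m * (u : X) (m+1)) else 0 with hTf
  have hTfb : ∀ u m, ‖Tf u m‖ ≤ 1 := by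
    intro u m
    rw [hTf]
    by_cases hm : M ≤ m
    · simp only [if_pos hm]
      have hd := hden _ m hm (hmem u (m+1))
      have hdp : (0:ℝ) < ‖c2 m - c1 m * (u : X) (m+1)‖ := lt_of_lt_of_le (by linarith [hP m]) hd
      rw [norm_div, norm_neg, div_le_iff₀ hdp]
      have := hb3 m
      linarith [hP m]
    · simp [if_neg hm]
  set T : S → S := fun u =>
    ⟨ofNormedAddCommGroup (Tf u) continuous_of_discreteTopology 1 (hTfb u),
      norm_ofNormedAddCommGroup_le _ zero_le_one _⟩ with hT
  have hTlip : ∀ u v : S, dist (T u) (T v) ≤ (1/2) * dist u v := by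
    intro u v
    rw [Subtype.dist_eq]
    have hdnn : (0:ℝ) ≤ (1/2) * dist u v := by positivity
    refine (BoundedContinuousFunction.dist_le hdnn).mpr fun m => ?_
    rw [hT]
    simp only [coe_ofNormedAddCommGroup]
    rw [hTf]
    by_cases hm : M ≤ m
    · simp only [if_pos hm]
      set x := c2 m - c1 m * (u : X) (m+1) with hx
      set y := c2 m - c1 m * (v : X) (m+1) with hy
      have hxl : 2 * μ' * ((m:ℝ) + A) ≤ ‖x‖ := hden _ m hm (hmem u (m+1))
      have hyl : 2 * μ' * ((m:ℝ) + A) ≤ ‖y‖ := hden _ m hm (hmem v (m+1))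
      have hxp : (0:ℝ) < ‖x‖ := lt_of_lt_of_le (by linarith [hP m]) hxl
      have hyp : (0:ℝ) < ‖y‖ := lt_of_lt_of_le (by linarith [hP m]) hyl
      have hx0 : x ≠ 0 := norm_pos_iff.mp hxp
      have hy0 : y ≠ 0 := norm_pos_iff.mp hyp
      have key : - c3 m / x - - c3 m / y
          = c3 m * (c1 m * ((v : X) (m+1) - (u : X) (m+1))) / (x * y) := by
        field_simp
        ring
      rw [dist_eq_norm, key, norm_div, norm_mul, norm_mul, norm_mul]
      have hd' : ‖(v : X) (m+1) - (u : X) (m+1)‖ ≤ dist u v := by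
        rw [← dist_eq_norm, dist_comm]
        calc dist ((u : X) (m+1)) ((v : X) (m+1)) ≤ dist (u : X) (v : X) :=
              BoundedContinuousFunction.dist_coe_le_dist _
          _ = dist u v := (Subtype.dist_eq u v).symm
      rw [div_le_iff₀ (mul_pos hxp hyp)]
      have hb3m := hb3 m
      have hb1m := hb1 m
      have hPm := hP m
      have hDnn : (0:ℝ) ≤ dist u v := dist_nonneg
      nlinarith [norm_nonneg (c3 m), norm_nonneg (c1 m),
        norm_nonneg ((v : X) (m+1) - (u : X) (m+1)),
        mul_le_mul hb1m hd' (norm_nonneg _) hPm.le,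
        mul_le_mul hb3m (mul_le_mul hb1m hd' (norm_nonneg _) hPm.le)
          (mul_nonneg (norm_nonneg _) (norm_nonneg _)) hPm.le,
        mul_le_mul hxl hyl (by linarith [hP m] : (0:ℝ) ≤ 2 * μ' * ((m:ℝ) + A)) (norm_nonneg x)]
    · simp [if_neg hm]
  have hcontr : ContractingWith (1/2 : NNReal) T := by
    constructor
    · exact NNReal.coe_lt_coe.mp (by norm_num)
    · apply LipschitzWith.of_dist_le_mul
      intro u v
      have := hTlip u v
      rwa [show ((1/2 : NNReal) : ℝ) = 1/2 by norm_num]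
  set u₀ := ContractingWith.fixedPoint T hcontr with hu₀
  have hfix : T u₀ = u₀ := hcontr.fixedPoint_isFixedPt
  refine ⟨fun m => (u₀ : X) m, fun m => hmem u₀ m, fun m hm => ?_⟩
  show (u₀ : X) m = -c3 m / (c2 m - c1 m * (u₀ : X) (m+1))
  have h : ((T u₀ : S) : X) m = (u₀ : X) m := congrArg (fun f : S => (f : X) m) hfix
  rw [← h]
  show Tf u₀ m = _
  simp only [hTf, if_pos hm]

lemma heun_main (c1 c2 c3 : ℕ → ℂ) (μ' A L : ℝ)
    (hμ' : 0 < μ') (hA : 0 < A) (hL : 0 ≤ L)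
    (h1 : ∀ m, c1 m ≠ 0) (h3 : ∀ m, c3 m ≠ 0)
    (hb1 : ∀ m : ℕ, ‖c1 m‖ ≤ μ' * ((m:ℝ) + A))
    (hb3 : ∀ m : ℕ, ‖c3 m‖ ≤ μ' * ((m:ℝ) + A))
    (hb3l : ∀ m : ℕ, μ' * ((m:ℝ) - A) ≤ ‖c3 m‖)
    (hb2 : ∀ m : ℕ, A ≤ (m:ℝ) → ((m:ℝ) - A)^2 - L ≤ ‖c2 m‖) :
    ∃ a : ℕ → ℂ, a ≠ 0 ∧
      (∀ m, c2 m * a (m+1) - c1 m * a (m+2) + c3 m * a m = 0) ∧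
      (∀ w : ℂ, Summable fun m => a m * w ^ m) ∧
      ∀ a' : ℕ → ℂ, (∀ m, c2 m * a' (m+1) - c1 m * a' (m+2) + c3 m * a' m = 0) →
        (∃ w : ℂ, w ≠ 0 ∧ Summable fun m => a' m * w ^ m) →
        ∃ c : ℂ, ∀ m, a' m = c * a m := by
  classical
  have hP : ∀ m : ℕ, 0 < μ' * ((m:ℝ) + A) := fun m =>
    mul_pos hμ' (add_pos_of_nonneg_of_pos (Nat.cast_nonneg m) hA)
  obtain ⟨M, hM⟩ := quad_lemma A L (3*μ') hA.le hL (by positivity)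
  obtain ⟨t, ht_le, ht_eq⟩ := heun_exists_t c1 c2 c3 μ' A L M hμ' hA hb1 hb3
    (fun m hm => ⟨(hM m hm).2, hb2 m (hM m hm).1⟩)
  have hden : ∀ m : ℕ, M ≤ m → 2 * μ' * ((m:ℝ) + A) ≤ ‖c2 m - c1 m * t (m+1)‖ := by
    intro m hm
    have h2 := hb2 m (hM m hm).1
    have hq := (hM m hm).2
    have hz : ‖c1 m * t (m+1)‖ ≤ μ' * ((m:ℝ) + A) := by
      rw [norm_mul]
      calc ‖c1 m‖ * ‖t (m+1)‖ ≤ (μ' * ((m:ℝ)+A)) * 1 :=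
            mul_le_mul (hb1 m) (ht_le _) (norm_nonneg _) (hP m).le
        _ = _ := mul_one _
    have h4 := norm_sub_norm_le (c2 m) (c1 m * t (m+1))
    linarith
  have hdpos : ∀ m : ℕ, M ≤ m → (0:ℝ) < ‖c2 m - c1 m * t (m+1)‖ :=
    fun m hm => lt_of_lt_of_le (by linarith [hP m]) (hden m hm)
  have hdne : ∀ m : ℕ, M ≤ m → c2 m - c1 m * t (m+1) ≠ 0 :=
    fun m hm => norm_pos_iff.mp (hdpos m hm)
  have htnorm : ∀ m : ℕ, M ≤ m → ‖t m‖ * ‖c2 m - c1 m * t (m+1)‖ = ‖c3 m‖ := by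
    intro m hm
    rw [ht_eq m hm, ← norm_mul, div_mul_cancel₀ _ (hdne m hm), norm_neg]
  have hfix' : ∀ m : ℕ, M ≤ m → c2 m * t m - c1 m * (t (m+1) * t m) + c3 m = 0 := by
    intro m hm
    have h := ht_eq m hm
    rw [eq_div_iff (hdne m hm)] at h
    linear_combination h
  have hsmall : ∀ r : ℝ, 0 ≤ r → ∃ Mw : ℕ, ∀ m : ℕ, Mw ≤ m → ‖t m‖ * r ≤ 1/2 := by
    intro r hr
    obtain ⟨M₁, hM₁⟩ := quad_lemma A L (μ' * (1 + 2*r)) hA.le hL (by positivity)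
    refine ⟨max M M₁, fun m hm => ?_⟩
    have hm1 : M ≤ m := le_trans (le_max_left _ _) hm
    have hm2 : M₁ ≤ m := le_trans (le_max_right _ _) hm
    have hq := (hM₁ m hm2).2
    have h2 := hb2 m (hM₁ m hm2).1
    have hz : ‖c1 m * t (m+1)‖ ≤ μ' * ((m:ℝ) + A) := by
      rw [norm_mul]
      calc ‖c1 m‖ * ‖t (m+1)‖ ≤ (μ' * ((m:ℝ)+A)) * 1 :=
            mul_le_mul (hb1 m) (ht_le _) (norm_nonneg _) (hP m).le
        _ = _ := mul_one _
    have h4 := norm_sub_norm_le (c2 m) (c1 m * t (m+1))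
    have hE : 2 * r * (μ' * ((m:ℝ)+A)) ≤ ‖c2 m - c1 m * t (m+1)‖ := by nlinarith [hP m]
    have hTE := htnorm m hm1
    have hc3 := hb3 m
    have hEpos := hdpos m hm1
    have hkey : (‖t m‖ * r) * ‖c2 m - c1 m * t (m+1)‖
        ≤ (1/2) * ‖c2 m - c1 m * t (m+1)‖ := by
      nlinarith [norm_nonneg (t m), hP m, mul_le_mul_of_nonneg_left hc3 hr]
    exact le_of_mul_le_mul_right hkey hEpos
  -- construction of a
  obtain ⟨aUp, haUp0, haUpS⟩ : ∃ f : ℕ → ℂ, f 0 = 1 ∧ ∀ j, f (j+1) = f j * t (M + j) :=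
    ⟨fun j => ∏ i ∈ Finset.range j, t (M + i), by simp, fun j => Finset.prod_range_succ _ j⟩
  obtain ⟨g, hg0, hgs⟩ : ∃ g : ℕ → ℂ × ℂ, g 0 = (aUp 0, aUp 1) ∧ ∀ i, g (i+1) =
      ((c1 (M - i - 1) * (g i).2 - c2 (M - i - 1) * (g i).1) / c3 (M - i - 1), (g i).1) :=
    ⟨fun i => Nat.rec (aUp 0, aUp 1)
      (fun i p => ((c1 (M - i - 1) * p.2 - c2 (M - i - 1) * p.1) / c3 (M - i - 1), p.1)) i,
      rfl, fun i => rfl⟩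
  obtain ⟨a, haM, haMlt⟩ : ∃ a : ℕ → ℂ,
      (∀ m, M ≤ m → a m = aUp (m - M)) ∧ (∀ m, m < M → a m = (g (M - m)).1) :=
    ⟨fun m => if h : M ≤ m then aUp (m - M) else (g (M - m)).1,
     fun m hm => dif_pos hm, fun m hm => dif_neg (by omega)⟩
  have hF2 : a M = 1 := by rw [haM M le_rfl, Nat.sub_self, haUp0]
  have hF1 : ∀ m, M ≤ m → a (m+1) = t m * a m := by
    intro m hm
    rw [haM _ hm, haM _ (by omega), show m+1-M = (m-M)+1 from by omega, haUpS,
      show M + (m-M) = m from by omega, mul_comm]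
  have hF3 : ∀ i, i ≤ M → (g i).1 = a (M - i) ∧ (g i).2 = a (M - i + 1) := by
    intro i
    induction i with
    | zero =>
      intro _
      constructor
      · rw [hg0, Nat.sub_zero, haM M le_rfl, Nat.sub_self]
      · rw [hg0, Nat.sub_zero, haM (M+1) (Nat.le_succ M), show M+1-M = 1 from by omega, haUpS,
          haUp0, Nat.add_zero, one_mul]
    | succ i ih =>
      intro hi
      obtain ⟨ih1, ih2⟩ := ih (by omega)
      constructor
      · rw [haMlt _ (by omega : M - (i+1) < M), show M - (M - (i+1)) = i + 1 from by omega]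
      · rw [hgs i, show M - (i+1) + 1 = M - i from by omega]
        exact ih1
  have hF4 : ∀ m, c2 m * a (m+1) - c1 m * a (m+2) + c3 m * a m = 0 := by
    intro m
    by_cases hm : M ≤ m
    · have e1 := hF1 m hm
      have e2 := hF1 (m+1) (by omega)
      rw [e1] at e2
      rw [e1, show m+2 = m+1+1 from rfl, e2]
      linear_combination (a m) * hfix' m hm
    · obtain ⟨j, hj⟩ : ∃ j, M - m = j + 1 := ⟨M - m - 1, by omega⟩
      have hjM : j ≤ M := by omega
      have h5 := (hF3 j hjM).1
      have h6 := (hF3 j hjM).2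
      rw [show M - j = m + 1 from by omega] at h5
      rw [show M - j + 1 = m + 2 from by omega] at h6
      have h7 := haMlt m (by omega)
      rw [hj, hgs j, show M - j - 1 = m from by omega, h5, h6] at h7
      rw [eq_div_iff (h3 m)] at h7
      linear_combination h7
  have hF9 : a ≠ 0 := by
    intro h
    have := congrFun h M
    rw [hF2] at this
    exact one_ne_zero this
  have hnb : ∀ m, a m = 0 → a (m+1) = 0 → False := by
    intro m h0 h1'
    have hup : ∀ j, a (m+j) = 0 ∧ a (m+j+1) = 0 := by
      intro j
      induction j with
      | zero => exact ⟨h0, h1'⟩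
      | succ j ih =>
        obtain ⟨u1, u2⟩ := ih
        have hrec := hF4 (m+j)
        rw [u1, u2] at hrec
        have h9 : c1 (m+j) * a (m+j+2) = 0 := by linear_combination - hrec
        have hz : a (m+j+2) = 0 := by
          rcases mul_eq_zero.mp h9 with h | h
          · exact absurd h (h1 (m+j))
          · exact h
        exact ⟨by rw [show m+(j+1) = m+j+1 from by omega]; exact u2,
               by rw [show m+(j+1)+1 = m+j+2 from by omega]; exact hz⟩
    have hdown : ∀ i, a (m-i) = 0 ∧ a (m-i+1) = 0 := by
      intro i
      induction i with
      | zero => exact ⟨by rw [Nat.sub_zero]; exact h0, by rw [Nat.sub_zero]; exact h1'⟩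
      | succ i ih =>
        obtain ⟨u1, u2⟩ := ih
        by_cases hlt : i < m
        · rw [show m - i = (m - (i+1)) + 1 from by omega] at u1
          rw [show m - i + 1 = (m - (i+1)) + 1 + 1 from by omega] at u2
          have hrec := hF4 (m - (i+1))
          rw [u1, show m - (i+1) + 2 = m - (i+1) + 1 + 1 from rfl, u2] at hrec
          have h9 : c3 (m-(i+1)) * a (m-(i+1)) = 0 := by linear_combination hrec
          have hz : a (m-(i+1)) = 0 := by
            rcases mul_eq_zero.mp h9 with h | h
            · exact absurd h (h3 _)
            · exact h
          exact ⟨hz, u1⟩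
        · rw [show m - (i+1) = m - i from by omega]
          exact ⟨u1, u2⟩
    have hzM : a M = 0 := by
      rcases le_or_gt m M with h | h
      · have := (hup (M - m)).1
        rwa [show m + (M-m) = M from by omega] at this
      · have := (hdown (m - M)).1
        rwa [show m - (m-M) = M from by omega] at this
    rw [hF2] at hzM
    exact one_ne_zero hzM
  have hsum : ∀ w : ℂ, Summable fun m => a m * w ^ m := by
    intro w
    obtain ⟨Mw, hMw⟩ := hsmall ‖w‖ (norm_nonneg w)
    apply summable_of_ratio_norm_eventually_le (r := 1/2) (by norm_num)
    filter_upwards [Filter.eventually_ge_atTop (max M Mw)] with m hm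
    have hm1 : M ≤ m := le_trans (le_max_left _ _) hm
    have hm2 : Mw ≤ m := le_trans (le_max_right _ _) hm
    rw [hF1 m hm1]
    calc ‖t m * a m * w ^ (m+1)‖ = (‖t m‖ * ‖w‖) * ‖a m * w ^ m‖ := by
          rw [show t m * a m * w^(m+1) = (t m * w) * (a m * w^m) from by ring,
            norm_mul, norm_mul]
      _ ≤ (1/2) * ‖a m * w ^ m‖ := mul_le_mul_of_nonneg_right (hMw m hm2) (norm_nonneg _)
  refine ⟨a, hF9, hF4, hsum, ?_⟩
  -- uniqueness
  intro a' hrec' hEx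
  obtain ⟨w₀, hw0, hsum'⟩ := hEx
  have hw0p : (0:ℝ) < ‖w₀‖ := norm_pos_iff.mpr hw0
  obtain ⟨R, hR⟩ : ∃ R : ℝ, R = ‖w₀‖⁻¹ := ⟨_, rfl⟩
  have hRpos : 0 < R := by rw [hR]; exact inv_pos.mpr hw0p
  have hev : ∀ᶠ m in atTop, ‖a' m * w₀ ^ m‖ ≤ 1 := by
    have hnt : Tendsto (fun m => ‖a' m * w₀ ^ m‖) atTop (𝓝 0) := by
      simpa using hsum'.tendsto_atTop_zero.norm
    exact hnt.eventually_le_const (by norm_num)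
  obtain ⟨N₀, hN₀⟩ := Filter.eventually_atTop.mp hev
  obtain ⟨C, hC⟩ : ∃ C : ℝ, C = 1 + ∑ i ∈ Finset.range N₀, ‖a' i * w₀ ^ i‖ := ⟨_, rfl⟩
  have hCsum : (0:ℝ) ≤ ∑ i ∈ Finset.range N₀, ‖a' i * w₀ ^ i‖ :=
    Finset.sum_nonneg (fun _ _ => norm_nonneg _)
  have hCpos : 0 < C := by rw [hC]; linarith
  have hbound : ∀ m, ‖a' m * w₀ ^ m‖ ≤ C := by
    intro m
    rcases le_or_gt N₀ m with h | h
    · have := hN₀ m h; rw [hC]; linarith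
    · have hle : ‖a' m * w₀ ^ m‖ ≤ ∑ i ∈ Finset.range N₀, ‖a' i * w₀ ^ i‖ :=
        Finset.single_le_sum (f := fun i => ‖a' i * w₀ ^ i‖)
          (fun _ _ => norm_nonneg _) (Finset.mem_range.mpr h)
      rw [hC]; linarith
  have ha'bound : ∀ m, ‖a' m‖ ≤ C * R ^ m := by
    intro m
    have h1' : ‖a' m‖ * ‖w₀‖ ^ m ≤ C := by
      rw [← norm_pow, ← norm_mul]; exact hbound m
    have h2' : (0:ℝ) < ‖w₀‖ ^ m := pow_pos hw0p m
    rw [hR, inv_pow, ← div_eq_mul_inv, le_div_iff₀ h2']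
    exact h1'
  obtain ⟨D, hDdef⟩ : ∃ D : ℕ → ℂ, ∀ m, D m = a (m+1) * a' m - a m * a' (m+1) :=
    ⟨_, fun m => rfl⟩
  have hDrec : ∀ m, c1 m * D (m+1) = - c3 m * D m := by
    intro m
    rw [hDdef, hDdef]
    linear_combination (a (m+1)) * hrec' m - (a' (m+1)) * hF4 m
  by_cases hD0 : D 0 = 0
  · -- proportionality
    have hkey : ∃ c : ℂ, a' 0 = c * a 0 ∧ a' 1 = c * a 1 := by
      rcases eq_or_ne (a 0) 0 with h0 | h0
      · have h1' : a 1 ≠ 0 := fun h => hnb 0 h0 h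
        refine ⟨a' 1 / a 1, ?_, (div_mul_cancel₀ _ h1').symm⟩
        have hz : a 1 * a' 0 = 0 := by
          rw [hDdef 0, h0] at hD0
          linear_combination hD0
        have : a' 0 = 0 := by
          rcases mul_eq_zero.mp hz with h | h
          · exact absurd h h1'
          · exact h
        rw [this, h0, mul_zero]
      · refine ⟨a' 0 / a 0, (div_mul_cancel₀ _ h0).symm, ?_⟩
        rw [hDdef 0] at hD0
        field_simp
        linear_combination - hD0
    obtain ⟨c, hc0, hc1⟩ := hkey
    have hall : ∀ m, a' m = c * a m ∧ a' (m+1) = c * a (m+1) := by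
      intro m
      induction m with
      | zero => exact ⟨hc0, hc1⟩
      | succ m ih =>
        obtain ⟨i1, i2⟩ := ih
        refine ⟨i2, ?_⟩
        have hF := hF4 m
        have hG := hrec' m
        rw [i1, i2] at hG
        have hcc : c1 m * a' (m+2) = c1 m * (c * a (m+2)) := by
          linear_combination c * hF - hG
        have := mul_left_cancel₀ (h1 m) hcc
        rw [show m+1+1 = m+2 from rfl]
        exact this
    exact ⟨c, fun m => (hall m).1⟩
  · exfalso
    have hDne : ∀ m, D m ≠ 0 := by
      intro m
      induction m with
      | zero => exact hD0
      | succ m ih =>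
        intro h
        have hr := hDrec m
        rw [h, mul_zero] at hr
        rcases mul_eq_zero.mp hr.symm with h' | h'
        · exact h3 m (neg_eq_zero.mp h')
        · exact ih h'
    obtain ⟨ρ, hρ⟩ : ∃ x : ℝ, x = (8 * (R + 1))⁻¹ := ⟨_, rfl⟩
    have hρpos : 0 < ρ := by rw [hρ]; positivity
    have hρle : ρ ≤ 1/8 := by
      rw [hρ]
      rw [show (1:ℝ)/8 = (8:ℝ)⁻¹ from by norm_num]
      apply inv_anti₀ (by norm_num)
      linarith
    obtain ⟨M₂, hM₂⟩ := hsmall ρ⁻¹ (by positivity)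
    have htsmall : ∀ m, M₂ ≤ m → ‖t m‖ ≤ ρ := by
      intro m hm
      have h' := hM₂ m hm
      have h'' := mul_le_mul_of_nonneg_right h' hρpos.le
      rw [mul_assoc, inv_mul_cancel₀ hρpos.ne', mul_one] at h''
      linarith
    obtain ⟨N, hN⟩ : ∃ N : ℕ, N = max (max M M₂) ⌈3*A⌉₊ := ⟨_, rfl⟩
    have hN1 : M ≤ N := by rw [hN]; exact le_trans (le_max_left _ _) (le_max_left _ _)
    have hN2 : M₂ ≤ N := by rw [hN]; exact le_trans (le_max_right _ _) (le_max_left _ _)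
    have hN3 : (3*A : ℝ) ≤ (N:ℝ) := by
      rw [hN]
      exact le_trans (Nat.le_ceil _) (Nat.cast_le.mpr (le_max_right _ _))
    have hDlow : ∀ j, (1/2:ℝ)^j * ‖D N‖ ≤ ‖D (N+j)‖ := by
      intro j
      induction j with
      | zero => simp
      | succ j ih =>
        have hx3A : 3*A ≤ ((N+j : ℕ):ℝ) := by
          push_cast
          have : (0:ℝ) ≤ (j:ℝ) := Nat.cast_nonneg j
          linarith
        have hnorm : ‖c1 (N+j)‖ * ‖D (N+j+1)‖ = ‖c3 (N+j)‖ * ‖D (N+j)‖ := by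
          rw [← norm_mul, ← norm_mul, hDrec (N+j), neg_mul, norm_neg]
        have hup' := hb1 (N+j)
        have hlo' := hb3l (N+j)
        have hc1pos : 0 < ‖c1 (N+j)‖ := norm_pos_iff.mpr (h1 _)
        have s1 : μ' * (((N+j:ℕ):ℝ) + A) / 2 ≤ μ' * (((N+j:ℕ):ℝ) - A) := by
          have : A ≤ (((N+j:ℕ):ℝ) + A) / 2 - A + A := by linarith
          nlinarith [hμ'.le]
        have s2 : ‖c1 (N+j)‖ * ((1/2) * ‖D (N+j)‖) ≤ ‖c1 (N+j)‖ * ‖D (N+j+1)‖ := by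
          have t1 : (μ' * (((N+j:ℕ):ℝ) - A)) * ‖D (N+j)‖ ≤ ‖c3 (N+j)‖ * ‖D (N+j)‖ :=
            mul_le_mul_of_nonneg_right hlo' (norm_nonneg _)
          nlinarith [norm_nonneg (D (N+j)), norm_nonneg (D (N+j+1))]
        have hkey : (1/2) * ‖D (N+j)‖ ≤ ‖D (N+j+1)‖ :=
          le_of_mul_le_mul_left s2 hc1pos
        calc (1/2:ℝ)^(j+1) * ‖D N‖ = (1/2) * ((1/2)^j * ‖D N‖) := by ring
          _ ≤ (1/2) * ‖D (N+j)‖ := by linarith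
          _ ≤ ‖D (N+j+1)‖ := hkey
    have hadec : ∀ j, ‖a (N+j)‖ ≤ ‖a N‖ * ρ^j := by
      intro j
      induction j with
      | zero => simp
      | succ j ih =>
        rw [show N+(j+1) = (N+j)+1 from rfl, hF1 (N+j) (by omega), norm_mul]
        have ht' := htsmall (N+j) (by omega)
        calc ‖t (N+j)‖ * ‖a (N+j)‖ ≤ ρ * (‖a N‖ * ρ^j) :=
              mul_le_mul ht' ih (norm_nonneg _) hρpos.le
          _ = ‖a N‖ * ρ^(j+1) := by ring
    have hDup : ∀ j, ‖D (N+j)‖ ≤ (‖a N‖ * (C * R^N) * (1+R)) * (ρ*R)^j := by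
      intro j
      rw [hDdef]
      have u1 : ‖a (N+j+1)‖ ≤ ‖a N‖ * ρ^(j+1) := hadec (j+1)
      have u2 := hadec j
      have v1 : ‖a' (N+j)‖ ≤ C * R^(N+j) := ha'bound _
      have v2 : ‖a' (N+j+1)‖ ≤ C * R^(N+j+1) := ha'bound _
      have nn1 : (0:ℝ) ≤ ‖a N‖ * ρ^(j+1) := mul_nonneg (norm_nonneg _) (pow_nonneg hρpos.le _)
      have nn2 : (0:ℝ) ≤ C * R^(N+j) := mul_nonneg hCpos.le (pow_nonneg hRpos.le _)
      have nn3 : (0:ℝ) ≤ C * R^(N+j+1) := mul_nonneg hCpos.le (pow_nonneg hRpos.le _)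
      calc ‖a (N+j+1) * a' (N+j) - a (N+j) * a' (N+j+1)‖
          ≤ ‖a (N+j+1)‖ * ‖a' (N+j)‖ + ‖a (N+j)‖ * ‖a' (N+j+1)‖ := by
            refine le_trans (norm_sub_le _ _) ?_
            rw [norm_mul, norm_mul]
        _ ≤ (‖a N‖ * ρ^(j+1)) * (C * R^(N+j)) + (‖a N‖ * ρ^j) * (C * R^(N+j+1)) :=
            add_le_add (mul_le_mul u1 v1 (norm_nonneg _) nn1)
              (mul_le_mul u2 v2 (norm_nonneg _)
                (mul_nonneg (norm_nonneg _) (pow_nonneg hρpos.le _)))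
        _ = (‖a N‖ * C * R^N * ρ^j * R^j) * (ρ + R) := by ring
        _ ≤ (‖a N‖ * C * R^N * ρ^j * R^j) * (1 + R) := by
            have hnn : (0:ℝ) ≤ ‖a N‖ * C * R^N * ρ^j * R^j := by
              have := norm_nonneg (a N)
              have := pow_nonneg hρpos.le j
              have := pow_nonneg hRpos.le j
              have := pow_nonneg hRpos.le N
              positivity
            apply mul_le_mul_of_nonneg_left _ hnn
            linarith
        _ = (‖a N‖ * (C * R^N) * (1+R)) * (ρ*R)^j := by rw [mul_pow]; ring
    have hρR : ρ * R ≤ 1/8 := by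
      rw [hρ, inv_mul_eq_div, div_le_div_iff₀ (by positivity) (by norm_num)]
      linarith
    have hC₁nn : (0:ℝ) ≤ ‖a N‖ * (C * R^N) * (1+R) :=
      mul_nonneg (mul_nonneg (norm_nonneg _)
        (mul_nonneg hCpos.le (pow_nonneg hRpos.le _))) (by linarith [hRpos])
    have hcomb : ∀ j, ‖D N‖ ≤ (‖a N‖ * (C * R^N) * (1+R)) * (1/4:ℝ)^j := by
      intro j
      have l1 := hDlow j
      have l2 := hDup j
      have l3 : (ρ*R)^j ≤ (1/8:ℝ)^j :=
        pow_le_pow_left₀ (mul_nonneg hρpos.le hRpos.le) hρR j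
      have l4 : (‖a N‖ * (C * R^N) * (1+R)) * (ρ*R)^j
          ≤ (‖a N‖ * (C * R^N) * (1+R)) * (1/8:ℝ)^j :=
        mul_le_mul_of_nonneg_left l3 hC₁nn
      have e1 : ‖D N‖ = (2:ℝ)^j * ((1/2)^j * ‖D N‖) := by
        rw [← mul_assoc, ← mul_pow]
        norm_num
      calc ‖D N‖ = (2:ℝ)^j * ((1/2)^j * ‖D N‖) := e1
        _ ≤ (2:ℝ)^j * ‖D (N+j)‖ :=
            mul_le_mul_of_nonneg_left l1 (pow_nonneg (by norm_num) j)
        _ ≤ (2:ℝ)^j * ((‖a N‖ * (C * R^N) * (1+R)) * (1/8:ℝ)^j) :=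
            mul_le_mul_of_nonneg_left (le_trans l2 l4) (pow_nonneg (by norm_num) j)
        _ = (‖a N‖ * (C * R^N) * (1+R)) * ((2:ℝ)^j * (1/8:ℝ)^j) := by ring
        _ = (‖a N‖ * (C * R^N) * (1+R)) * (1/4:ℝ)^j := by
            rw [← mul_pow]; norm_num
    have htend4 : Tendsto (fun j : ℕ => (‖a N‖ * (C * R^N) * (1+R)) * (1/4:ℝ)^j)
        atTop (𝓝 0) := by
      have h4' := tendsto_pow_atTop_nhds_zero_of_lt_one
        (by norm_num : (0:ℝ) ≤ 1/4) (by norm_num : (1/4:ℝ) < 1)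
      simpa using h4'.const_mul (‖a N‖ * (C * R^N) * (1+R))
    have hfin : ‖D N‖ ≤ 0 := ge_of_tendsto' htend4 hcomb
    exact hDne N (norm_eq_zero.mp (le_antisymm hfin (norm_nonneg _)))

end HeunAux

/-- Backward solutions: for `μ ≠ 0` and `k₀ ∈ ℤ` with `k + b + n - 1 ≠ 0` and `k + b + 1 ≠ 0`
for all `k < k₀`, there is a sequence `(a_k)_{k ≤ k₀}` (encoded as `a m = a_{k₀-m}`),
unique up to a constant factor, not identically zero, satisfying the Heun recurrence at every
`k < k₀` and such that `∑_{m ≥ 0} a_{k₀-m} w^m` has infinite radius of convergence. -/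
theorem heun_backward_solution
    (n lam mu b : ℂ) (hmu : mu ≠ 0) (k0 : ℤ)
    (hk : ∀ k : ℤ, k < k0 → ((k : ℂ) + b + n - 1 ≠ 0 ∧ (k : ℂ) + b + 1 ≠ 0)) :
    ∃ a : ℕ → ℂ, a ≠ 0 ∧
      (∀ m : ℕ, HeunRec n lam mu b (a (m + 2)) (a (m + 1)) (a m) ((k0 : ℂ) - m - 1)) ∧
      (∀ w : ℂ, Summable fun m => a m * w ^ m) ∧
      ∀ a' : ℕ → ℂ,
        (∀ m : ℕ, HeunRec n lam mu b (a' (m + 2)) (a' (m + 1)) (a' m) ((k0 : ℂ) - m - 1)) →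
        (∃ w : ℂ, w ≠ 0 ∧ Summable fun m => a' m * w ^ m) →
        ∃ c : ℂ, ∀ m, a' m = c * a m := by
  have hkne : ∀ m : ℕ, ((k0:ℂ) - m - 1 + b + n - 1 ≠ 0) ∧ ((k0:ℂ) - m - 1 + b + 1 ≠ 0) := by
    intro m
    have h := hk (k0 - (m:ℤ) - 1) (by omega)
    constructor
    · intro hz
      apply h.1
      push_cast
      linear_combination hz
    · intro hz
      apply h.2
      push_cast
      linear_combination hz
  have hnatnorm : ∀ (z : ℂ) (r : ℝ) (m : ℕ), z = ((m:ℂ) + r) → ‖z‖ = (m:ℝ) + r → True :=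
    fun _ _ _ _ _ => trivial
  obtain ⟨A, hA⟩ : ∃ A : ℝ, A = ‖(k0:ℂ) + b‖ + ‖n‖ + 2 := ⟨_, rfl⟩
  have hApos : 0 < A := by rw [hA]; positivity
  have hnm2 : ∀ m : ℕ, ‖((m:ℂ) + 2)‖ = (m:ℝ) + 2 := by
    intro m
    rw [show ((m:ℂ) + 2) = ((m+2:ℕ):ℂ) from by push_cast; ring, Complex.norm_natCast]
    push_cast; ring
  have hnm1 : ∀ m : ℕ, ‖((m:ℂ) + 1)‖ = (m:ℝ) + 1 := by
    intro m
    rw [show ((m:ℂ) + 1) = ((m+1:ℕ):ℂ) from by push_cast; ring, Complex.norm_natCast]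
    push_cast; ring
  have hb1 : ∀ m : ℕ, ‖mu * ((k0:ℂ) - m - 1 + b + n - 1)‖ ≤ ‖mu‖ * ((m:ℝ) + A) := by
    intro m
    rw [norm_mul]
    apply mul_le_mul_of_nonneg_left _ (norm_nonneg mu)
    rw [show (k0:ℂ) - m - 1 + b + n - 1 = ((k0:ℂ) + b + n) - ((m:ℂ) + 2) from by ring]
    calc ‖((k0:ℂ) + b + n) - ((m:ℂ) + 2)‖ ≤ ‖(k0:ℂ) + b + n‖ + ‖((m:ℂ) + 2)‖ :=
          norm_sub_le _ _
      _ ≤ (‖(k0:ℂ) + b‖ + ‖n‖) + ((m:ℝ) + 2) := by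
          rw [hnm2 m]
          have := norm_add_le ((k0:ℂ) + b) n
          linarith
      _ ≤ (m:ℝ) + A := by rw [hA]; linarith
  have hb3 : ∀ m : ℕ, ‖mu * ((k0:ℂ) - m - 1 + b + 1)‖ ≤ ‖mu‖ * ((m:ℝ) + A) := by
    intro m
    rw [norm_mul]
    apply mul_le_mul_of_nonneg_left _ (norm_nonneg mu)
    rw [show (k0:ℂ) - m - 1 + b + 1 = ((k0:ℂ) + b) - (m:ℂ) from by ring]
    calc ‖((k0:ℂ) + b) - (m:ℂ)‖ ≤ ‖(k0:ℂ) + b‖ + ‖(m:ℂ)‖ := norm_sub_le _ _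
      _ ≤ (m:ℝ) + A := by
          rw [hA, Complex.norm_natCast]
          have := norm_nonneg n
          linarith
  have hb3l : ∀ m : ℕ, ‖mu‖ * ((m:ℝ) - A) ≤ ‖mu * ((k0:ℂ) - m - 1 + b + 1)‖ := by
    intro m
    rw [norm_mul]
    apply mul_le_mul_of_nonneg_left _ (norm_nonneg mu)
    rw [show (k0:ℂ) - m - 1 + b + 1 = ((k0:ℂ) + b) - (m:ℂ) from by ring, norm_sub_rev]
    have := norm_sub_norm_le ((m:ℂ)) ((k0:ℂ) + b)
    rw [Complex.norm_natCast] at this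
    rw [hA]
    have := norm_nonneg n
    linarith
  have hb2 : ∀ m : ℕ, A ≤ (m:ℝ) →
      ((m:ℝ) - A)^2 - ‖lam‖ ≤
        ‖((k0:ℂ) - m - 1 + b) * ((k0:ℂ) - m - 1 + b + n - 1) + lam‖ := by
    intro m hm
    have f1 : (m:ℝ) - A ≤ ‖(k0:ℂ) - m - 1 + b‖ := by
      rw [show (k0:ℂ) - m - 1 + b = ((k0:ℂ) + b) - ((m:ℂ) + 1) from by ring, norm_sub_rev]
      have := norm_sub_norm_le ((m:ℂ) + 1) ((k0:ℂ) + b)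
      rw [hnm1 m] at this
      rw [hA]
      have := norm_nonneg n
      linarith
    have f2 : (m:ℝ) - A ≤ ‖(k0:ℂ) - m - 1 + b + n - 1‖ := by
      rw [show (k0:ℂ) - m - 1 + b + n - 1 = ((k0:ℂ) + b + n) - ((m:ℂ) + 2) from by ring,
        norm_sub_rev]
      have h5 := norm_sub_norm_le ((m:ℂ) + 2) ((k0:ℂ) + b + n)
      rw [hnm2 m] at h5
      have h6 := norm_add_le ((k0:ℂ) + b) n
      rw [hA]
      linarith
    have f3 : (0:ℝ) ≤ (m:ℝ) - A := by linarith
    have f4 : ((m:ℝ) - A) * ((m:ℝ) - A) ≤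
        ‖(k0:ℂ) - m - 1 + b‖ * ‖(k0:ℂ) - m - 1 + b + n - 1‖ :=
      mul_le_mul f1 f2 f3 (norm_nonneg _)
    have f5 := norm_sub_norm_le
      (((k0:ℂ) - m - 1 + b) * ((k0:ℂ) - m - 1 + b + n - 1)) (-lam)
    rw [sub_neg_eq_add, norm_neg, norm_mul] at f5
    nlinarith
  obtain ⟨a, h0, h1, h2, h3⟩ := heun_main
    (fun m => mu * ((k0:ℂ) - m - 1 + b + n - 1))
    (fun m => (((k0:ℂ) - m - 1 + b) * ((k0:ℂ) - m - 1 + b + n - 1) + lam))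
    (fun m => mu * ((k0:ℂ) - m - 1 + b + 1))
    ‖mu‖ A ‖lam‖
    (norm_pos_iff.mpr hmu) hApos (norm_nonneg _)
    (fun m => mul_ne_zero hmu (hkne m).1)
    (fun m => mul_ne_zero hmu (hkne m).2)
    hb1 hb3 hb3l hb2
  refine ⟨a, h0, fun m => ?_, h2, fun a' ha' hw => h3 a' (fun m => ?_) hw⟩
  · have hrec := h1 m
    unfold HeunRec
    linear_combination hrec
  · have hrec := ha' m
    unfold HeunRec at hrec
    linear_combination hrec
end

section
/- Let n, λ, μ, b ∈ ℂ with μ ≠ 0, b ∉ ℤ and b + n ∉ ℤ. Let (a_k)_{k≥1} be a sequence, not identically zero, satisfying the Heun recurrence at every k ≥ 2 and such that ∑_{k≥1} a_k z^k has infinite radius of convergence; let (a'_k)_{k≤0} be a sequence, not identically zero, satisfying the Heun recurrence at every k ≤ −1 and such that ∑_{m≥0} a'_{−m} w^m has infinite radius of convergence. Set d₀₊ = μ(b+1)a₁, d₁₊ = ((b+1)(b+n) + λ)a₁ + μ(b+2)a₂, d₀₋ = (b(b+n−1) + λ)a'₀ − μ(b+n−1)a'₋₁, and d₁₋ = −μ(b+n)a'₀.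 Then there exists a two-sided sequence (c_k)_{k∈ℤ}, not identically zero, satisfying the Heun recurrence at every k ∈ ℤ and such that both ∑_{k≥0} c_k z^k and ∑_{k≥1} c_{−k} z^k have infinite radius of convergence, if and only if d₀₊·d₁₋ − d₀₋·d₁₊ = 0. (Such a two-sided sequence is exactly a monodromy eigenfunction E(z) = z^b ∑_{k∈ℤ} c_k z^k of the double confluent Heun equation with eigenvalue e^{2πib}.) -/
open Filter Topology

lemma heunRec_smul (n lam mu b x y z k s : ℂ) (h : HeunRec n lam mu b x y z k) :
    HeunRec n lam mu b (s * x) (s * y) (s * z) k := by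
  unfold HeunRec at h ⊢; linear_combination s * h

lemma heunRec_sub (n lam mu b x1 y1 z1 x2 y2 z2 k : ℂ)
    (h1 : HeunRec n lam mu b x1 y1 z1 k) (h2 : HeunRec n lam mu b x2 y2 z2 k) :
    HeunRec n lam mu b (x1 - x2) (y1 - y2) (z1 - z2) k := by
  unfold HeunRec at h1 h2 ⊢; linear_combination h1 - h2

lemma heunPosUnique (n lam mu b : ℂ) (hmu : mu ≠ 0) (hb : ∀ m : ℤ, b ≠ (m : ℂ))
    (d : ℕ → ℂ)
    (hd : ∀ m : ℕ, HeunRec n lam mu b (d m) (d (m + 1)) (d (m + 2)) ((m : ℂ) + 2))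
    (h0 : d 0 = 0) (h1 : d 1 = 0) : ∀ m, d m = 0 := by
  have key : ∀ m, d m = 0 ∧ d (m + 1) = 0 := by
    intro m
    induction m with
    | zero => exact ⟨h0, h1⟩
    | succ m ih =>
      refine ⟨ih.2, ?_⟩
      have h := hd m
      unfold HeunRec at h
      rw [ih.1, ih.2] at h
      have h2 : (mu * ((m : ℂ) + 2 + b + 1)) * d (m + 2) = 0 := by linear_combination h
      have hne : mu * ((m : ℂ) + 2 + b + 1) ≠ 0 := by
        refine mul_ne_zero hmu ?_
        intro hc
        apply hb (-(m : ℤ) - 3)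
        push_cast
        linear_combination hc
      exact (mul_eq_zero.mp h2).resolve_left hne
  exact fun m => (key m).1

lemma heunNegUnique (n lam mu b : ℂ) (hmu : mu ≠ 0) (hbn : ∀ m : ℤ, b + n ≠ (m : ℂ))
    (d : ℕ → ℂ)
    (hd : ∀ m : ℕ, HeunRec n lam mu b (d (m + 2)) (d (m + 1)) (d m) (-(m : ℂ) - 1))
    (h0 : d 0 = 0) (h1 : d 1 = 0) : ∀ m, d m = 0 := by
  have key : ∀ m, d m = 0 ∧ d (m + 1) = 0 := by
    intro m
    induction m with
    | zero => exact ⟨h0, h1⟩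
    | succ m ih =>
      refine ⟨ih.2, ?_⟩
      have h := hd m
      unfold HeunRec at h
      rw [ih.1, ih.2] at h
      have h2 : (mu * (-(m : ℂ) - 1 + b + n - 1)) * d (m + 2) = 0 := by linear_combination -h
      have hne : mu * (-(m : ℂ) - 1 + b + n - 1) ≠ 0 := by
        refine mul_ne_zero hmu ?_
        intro hc
        apply hbn ((m : ℤ) + 2)
        push_cast
        linear_combination hc
      exact (mul_eq_zero.mp h2).resolve_left hne
  exact fun m => (key m).1

lemma key_wronskian (β₁ β₂ : ℂ) (h₁ : ∀ m : ℕ, ((m : ℂ) + β₁) ≠ 0)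
    (h₂ : ∀ m : ℕ, ((m : ℂ) + β₂) ≠ 0) (W : ℕ → ℂ)
    (hrel : ∀ m : ℕ, ((m : ℂ) + β₁) * W (m + 1) = -((m : ℂ) + β₂) * W m)
    (hdec : Tendsto (fun m => W m * (16 : ℂ) ^ m) atTop (𝓝 0)) : ∀ m, W m = 0 := by
  by_contra hcon
  push_neg at hcon
  obtain ⟨m₀, hm₀⟩ := hcon
  set K := max m₀ ⌈2 * ‖β₂‖ + ‖β₁‖⌉₊ with hKdef
  have hnz : ∀ m, m₀ ≤ m → W m ≠ 0 := by
    intro m hm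
    induction m, hm using Nat.le_induction with
    | base => exact hm₀
    | succ m hm ih =>
      intro h0
      apply ih
      have h := hrel m
      rw [h0, mul_zero] at h
      have h2 : ((m : ℂ) + β₂) * W m = 0 := by linear_combination h
      exact (mul_eq_zero.mp h2).resolve_left (h₂ m)
  have hWK : W K ≠ 0 := hnz K (le_max_left _ _)
  have hKr : 2 * ‖β₂‖ + ‖β₁‖ ≤ (K : ℝ) := by
    refine (Nat.le_ceil _).trans ?_
    exact_mod_cast le_max_right m₀ _
  have hgrow : ∀ m, K ≤ m → ‖W K‖ * (1/2 : ℝ) ^ (m - K) ≤ ‖W m‖ := by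
    intro m hm
    induction m, hm using Nat.le_induction with
    | base => simp
    | succ m hm ih =>
      have hmr : 2 * ‖β₂‖ + ‖β₁‖ ≤ (m : ℝ) := hKr.trans (by exact_mod_cast hm)
      have hstep : (1/2 : ℝ) * ‖W m‖ ≤ ‖W (m + 1)‖ := by
        have h := hrel m
        have hnorm : ‖(m : ℂ) + β₁‖ * ‖W (m + 1)‖ = ‖(m : ℂ) + β₂‖ * ‖W m‖ := by
          rw [← norm_mul, h, neg_mul, norm_neg, norm_mul]
        have hb1 : ‖(m : ℂ) + β₁‖ ≤ (m : ℝ) + ‖β₁‖ := by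
          refine (norm_add_le _ _).trans ?_
          simp
        have hb2 : (m : ℝ) - ‖β₂‖ ≤ ‖(m : ℂ) + β₂‖ := by
          have h' := norm_add_le ((m : ℂ) + β₂) (-β₂)
          rw [add_neg_cancel_right, norm_neg] at h'
          have hmn : ‖(m : ℂ)‖ = (m : ℝ) := Complex.norm_natCast m
          linarith
        have hpos : 0 < ‖(m : ℂ) + β₁‖ := norm_pos_iff.mpr (h₁ m)
        nlinarith [norm_nonneg (W m), norm_nonneg (W (m + 1))]
      calc ‖W K‖ * (1/2 : ℝ) ^ (m + 1 - K)
          = (1/2) * (‖W K‖ * (1/2) ^ (m - K)) := by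
            rw [show m + 1 - K = (m - K) + 1 from by omega, pow_succ]; ring
        _ ≤ (1/2) * ‖W m‖ := by linarith
        _ ≤ ‖W (m + 1)‖ := hstep
  have hWKpos : 0 < ‖W K‖ := norm_pos_iff.mpr hWK
  obtain ⟨N, hN⟩ := (Metric.tendsto_atTop.mp hdec) ‖W K‖ hWKpos
  have h1 := hN (max N K) (le_max_left _ _)
  rw [dist_zero_right] at h1
  set m := max N K with hmdef
  have h2 : ‖W m * (16 : ℂ) ^ m‖ = ‖W m‖ * 16 ^ m := by
    rw [norm_mul, norm_pow]
    norm_num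
  have h3 : ‖W K‖ ≤ ‖W m‖ * 16 ^ m := by
    have hg := hgrow m (le_max_right _ _)
    have hp : (1 : ℝ) ≤ (1/2) ^ (m - K) * 16 ^ m := by
      have e1 : (1/16 : ℝ) ^ m ≤ (1/2) ^ (m - K) := by
        calc (1/16 : ℝ) ^ m ≤ (1/2) ^ m := by
              apply pow_le_pow_left₀ (by norm_num) (by norm_num)
          _ ≤ (1/2) ^ (m - K) := by
              apply pow_le_pow_of_le_one (by norm_num) (by norm_num) (Nat.sub_le m K)
      calc (1 : ℝ) = (1/16) ^ m * 16 ^ m := by rw [← mul_pow]; norm_num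
        _ ≤ (1/2) ^ (m - K) * 16 ^ m := by
            exact mul_le_mul_of_nonneg_right e1 (by positivity)
    calc ‖W K‖ = ‖W K‖ * 1 := (mul_one _).symm
      _ ≤ ‖W K‖ * ((1/2) ^ (m - K) * 16 ^ m) := by
          exact mul_le_mul_of_nonneg_left hp (norm_nonneg _)
      _ = (‖W K‖ * (1/2) ^ (m - K)) * 16 ^ m := by ring
      _ ≤ ‖W m‖ * 16 ^ m := mul_le_mul_of_nonneg_right hg (by positivity)
  rw [h2] at h1
  linarith

/-- Corollary on eigenfunction existence: let `(a_k)_{k ≥ 1}` (encoded by `a : ℕ → ℂ`, value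
`a k` relevant for `k ≥ 1`) be a nonzero solution of the Heun recurrence at every `k ≥ 2`
whose series `∑_{k ≥ 1} a_k z^k` converges everywhere, and `(a'_{-m})_{m ≥ 0}` (encoded by
`a' : ℕ → ℂ`, `a' m = a'_{-m}`) a nonzero solution at every `k ≤ -1` whose series converges
everywhere. With `d₀₊ = μ(b+1)a₁`, `d₁₊ = ((b+1)(b+n)+λ)a₁ + μ(b+2)a₂`,
`d₀₋ = (b(b+n-1)+λ)a'₀ - μ(b+n-1)a'₋₁`, `d₁₋ = -μ(b+n)a'₀`, a two-sided everywhere-converging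
nonzero solution (i.e. a monodromy eigenfunction with eigenvalue `e^{2πib}`) exists iff
`d₀₊ d₁₋ - d₀₋ d₁₊ = 0`. -/
theorem heun_eigenfunction_iff_pasting
    (n lam mu b : ℂ) (hmu : mu ≠ 0)
    (hb : ∀ m : ℤ, b ≠ (m : ℂ)) (hbn : ∀ m : ℤ, b + n ≠ (m : ℂ))
    (a : ℕ → ℂ) (ha0 : ∃ k : ℕ, a (k + 1) ≠ 0)
    (harec : ∀ m : ℕ, HeunRec n lam mu b (a (m + 1)) (a (m + 2)) (a (m + 3)) ((m : ℂ) + 2))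
    (hasum : ∀ z : ℂ, Summable fun k : ℕ => a (k + 1) * z ^ (k + 1))
    (a' : ℕ → ℂ) (ha'0 : ∃ m : ℕ, a' m ≠ 0)
    (ha'rec : ∀ m : ℕ, HeunRec n lam mu b (a' (m + 2)) (a' (m + 1)) (a' m) (-(m : ℂ) - 1))
    (ha'sum : ∀ w : ℂ, Summable fun m : ℕ => a' m * w ^ m)
    (d0p d1p d0m d1m : ℂ)
    (hd0p : d0p = mu * (b + 1) * a 1)
    (hd1p : d1p = ((b + 1) * (b + n) + lam) * a 1 + mu * (b + 2) * a 2)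
    (hd0m : d0m = (b * (b + n - 1) + lam) * a' 0 - mu * (b + n - 1) * a' 1)
    (hd1m : d1m = -mu * (b + n) * a' 0) :
    (∃ c : ℤ → ℂ, c ≠ 0 ∧
      (∀ k : ℤ, HeunRec n lam mu b (c (k - 1)) (c k) (c (k + 1)) (k : ℂ)) ∧
      (∀ z : ℂ, Summable fun k : ℕ => c (k : ℤ) * z ^ k) ∧
      (∀ z : ℂ, Summable fun k : ℕ => c (-(k : ℤ) - 1) * z ^ (k + 1)))
    ↔ d0p * d1m - d0m * d1p = 0 := by
  constructor
  · rintro ⟨c, hc0, hcrec, hcsum, hcsum'⟩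
    -- translated recurrences for c
    have hv : ∀ m : ℕ, HeunRec n lam mu b (c ((m+1 : ℕ) : ℤ)) (c ((m+2 : ℕ) : ℤ))
        (c ((m+3 : ℕ) : ℤ)) ((m : ℂ) + 2) := by
      intro m
      have h := hcrec ((m : ℤ) + 2)
      rw [show ((((m : ℤ) + 2 : ℤ)) : ℂ) = (m : ℂ) + 2 from by push_cast; ring] at h
      rw [show (m : ℤ) + 2 - 1 = ((m+1 : ℕ) : ℤ) from by push_cast; ring,
          show (m : ℤ) + 2 + 1 = ((m+3 : ℕ) : ℤ) from by push_cast; ring,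
          show (m : ℤ) + 2 = ((m+2 : ℕ) : ℤ) from by push_cast; ring] at h
      exact h
    have hv' : ∀ m : ℕ, HeunRec n lam mu b (c (-((m+2 : ℕ) : ℤ))) (c (-((m+1 : ℕ) : ℤ)))
        (c (-((m : ℕ) : ℤ))) (-(m : ℂ) - 1) := by
      intro m
      have h := hcrec (-(m : ℤ) - 1)
      rw [show (((-(m : ℤ) - 1 : ℤ)) : ℂ) = -(m : ℂ) - 1 from by push_cast; ring] at h
      rw [show -(m : ℤ) - 1 - 1 = -((m+2 : ℕ) : ℤ) from by push_cast; ring,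
          show -(m : ℤ) - 1 + 1 = -((m : ℕ) : ℤ) from by push_cast; ring,
          show -(m : ℤ) - 1 = -((m+1 : ℕ) : ℤ) from by push_cast; ring] at h
      exact h
    -- nondegeneracy of a and a'
    have hpair : ¬(a 1 = 0 ∧ a 2 = 0) := by
      rintro ⟨e1, e2⟩
      obtain ⟨k, hk⟩ := ha0
      exact hk (heunPosUnique n lam mu b hmu hb (fun m => a (m+1)) (fun m => harec m) e1 e2 k)
    have hpair' : ¬(a' 0 = 0 ∧ a' 1 = 0) := by
      rintro ⟨e1, e2⟩
      obtain ⟨k, hk⟩ := ha'0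
      exact hk (heunNegUnique n lam mu b hmu hbn a' ha'rec e1 e2 k)
    -- positive Wronskian
    set W : ℕ → ℂ := fun m => a (m+1) * c ((m+2 : ℕ) : ℤ) - a (m+2) * c ((m+1 : ℕ) : ℤ)
      with hWdef
    have hrelW : ∀ m : ℕ, ((m : ℂ) + (b+3)) * W (m+1) = -((m : ℂ) + (b+n+1)) * W m := by
      intro m
      have hA := harec m
      unfold HeunRec at hA
      have hC := hv m
      unfold HeunRec at hC
      apply mul_left_cancel₀ hmu
      simp only [hWdef]
      linear_combination a (m+2) * hC - c ((m+2 : ℕ) : ℤ) * hA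
    have hdecW : Tendsto (fun m => W m * (16 : ℂ) ^ m) atTop (𝓝 0) := by
      have hA : Tendsto (fun m : ℕ => a (m+1) * (4 : ℂ) ^ (m+1)) atTop (𝓝 0) :=
        (hasum 4).tendsto_atTop_zero
      have hC0 : Tendsto (fun m : ℕ => c ((m : ℕ) : ℤ) * (4 : ℂ) ^ m) atTop (𝓝 0) :=
        (hcsum 4).tendsto_atTop_zero
      have hC : Tendsto (fun m : ℕ => c ((m+1 : ℕ) : ℤ) * (4 : ℂ) ^ (m+1)) atTop (𝓝 0) :=
        hC0.comp (tendsto_add_atTop_nat 1)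
      have hA2 : Tendsto (fun m : ℕ => a (m+2) * (4 : ℂ) ^ (m+2)) atTop (𝓝 0) :=
        hA.comp (tendsto_add_atTop_nat 1)
      have hC2 : Tendsto (fun m : ℕ => c ((m+2 : ℕ) : ℤ) * (4 : ℂ) ^ (m+2)) atTop (𝓝 0) :=
        hC.comp (tendsto_add_atTop_nat 1)
      have key : Tendsto (fun m : ℕ =>
          (a (m+1) * (4 : ℂ) ^ (m+1) * (c ((m+2 : ℕ) : ℤ) * (4 : ℂ) ^ (m+2))
            - a (m+2) * (4 : ℂ) ^ (m+2) * (c ((m+1 : ℕ) : ℤ) * (4 : ℂ) ^ (m+1)))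
          * (1/64 : ℂ)) atTop (𝓝 0) := by
        have h1 := ((hA.mul hC2).sub (hA2.mul hC)).mul_const (1/64 : ℂ)
        simpa using h1
      refine key.congr ?_
      intro m
      simp only [hWdef]
      rw [show (16 : ℂ) ^ m = 4 ^ m * 4 ^ m from by rw [← mul_pow]; norm_num]
      ring
    have hW0 : ∀ m, W m = 0 := by
      refine key_wronskian (b+3) (b+n+1) ?_ ?_ W hrelW hdecW
      · intro m hc
        apply hb (-(m : ℤ) - 3)
        push_cast
        linear_combination hc
      · intro m hc
        apply hbn (-(m : ℤ) - 1)
        push_cast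
        linear_combination hc
    -- negative Wronskian
    set W' : ℕ → ℂ := fun m => a' m * c (-((m+1 : ℕ) : ℤ)) - a' (m+1) * c (-((m : ℕ) : ℤ))
      with hW'def
    have hrelW' : ∀ m : ℕ, ((m : ℂ) + (2-b-n)) * W' (m+1) = -((m : ℂ) + (-b)) * W' m := by
      intro m
      have hA := ha'rec m
      unfold HeunRec at hA
      have hC := hv' m
      unfold HeunRec at hC
      apply mul_left_cancel₀ hmu
      simp only [hW'def]
      linear_combination a' (m+1) * hC - c (-((m+1 : ℕ) : ℤ)) * hA
    have hdecW' : Tendsto (fun m => W' m * (16 : ℂ) ^ m) atTop (𝓝 0) := by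
      have hA : Tendsto (fun m : ℕ => a' m * (4 : ℂ) ^ m) atTop (𝓝 0) :=
        (ha'sum 4).tendsto_atTop_zero
      have hC0 : Tendsto (fun m : ℕ => c (-((m : ℕ) : ℤ)) * (4 : ℂ) ^ m) atTop (𝓝 0) := by
        have h := (hcsum' 4).tendsto_atTop_zero
        refine (tendsto_add_atTop_iff_nat 1).mp (h.congr ?_)
        intro k
        rw [show -(k : ℤ) - 1 = -((k+1 : ℕ) : ℤ) from by push_cast; ring]
      have hA1 : Tendsto (fun m : ℕ => a' (m+1) * (4 : ℂ) ^ (m+1)) atTop (𝓝 0) :=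
        hA.comp (tendsto_add_atTop_nat 1)
      have hC1 : Tendsto (fun m : ℕ => c (-((m+1 : ℕ) : ℤ)) * (4 : ℂ) ^ (m+1)) atTop (𝓝 0) :=
        hC0.comp (tendsto_add_atTop_nat 1)
      have key : Tendsto (fun m : ℕ =>
          (a' m * (4 : ℂ) ^ m * (c (-((m+1 : ℕ) : ℤ)) * (4 : ℂ) ^ (m+1))
            - a' (m+1) * (4 : ℂ) ^ (m+1) * (c (-((m : ℕ) : ℤ)) * (4 : ℂ) ^ m))
          * (1/4 : ℂ)) atTop (𝓝 0) := by
        have h1 := ((hA.mul hC1).sub (hA1.mul hC0)).mul_const (1/4 : ℂ)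
        simpa using h1
      refine key.congr ?_
      intro m
      simp only [hW'def]
      rw [show (16 : ℂ) ^ m = 4 ^ m * 4 ^ m from by rw [← mul_pow]; norm_num]
      ring
    have hW'0 : ∀ m, W' m = 0 := by
      refine key_wronskian (2-b-n) (-b) ?_ ?_ W' hrelW' hdecW'
      · intro m hc
        apply hbn ((m : ℤ) + 2)
        push_cast
        linear_combination -hc
      · intro m hc
        apply hb (m : ℤ)
        push_cast
        linear_combination -hc
    -- clean forms
    have hw0 : a 1 * c 2 - a 2 * c 1 = 0 := by
      have h := hW0 0
      simp only [hWdef] at h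
      norm_num at h
      exact h
    have hw0' : a' 0 * c (-1) - a' 1 * c 0 = 0 := by
      have h := hW'0 0
      simp only [hW'def] at h
      norm_num at h
      exact h
    -- scalars
    set s : ℂ := if a 1 = 0 then c 2 / a 2 else c 1 / a 1 with hsdef
    set t : ℂ := if a' 0 = 0 then c (-1) / a' 1 else c 0 / a' 0 with htdef
    have hs1 : c 1 = s * a 1 := by
      by_cases h1 : a 1 = 0
      · have h2 : a 2 ≠ 0 := fun h => hpair ⟨h1, h⟩
        rw [h1, mul_zero]
        have : a 2 * c 1 = 0 := by linear_combination -hw0 + c 2 * h1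
        exact (mul_eq_zero.mp this).resolve_left h2
      · rw [hsdef, if_neg h1, div_mul_cancel₀ _ h1]
    have hs2 : c 2 = s * a 2 := by
      by_cases h1 : a 1 = 0
      · have h2 : a 2 ≠ 0 := fun h => hpair ⟨h1, h⟩
        rw [hsdef, if_pos h1, div_mul_cancel₀ _ h2]
      · rw [hsdef, if_neg h1]
        field_simp
        linear_combination hw0
    have ht0 : c 0 = t * a' 0 := by
      by_cases h1 : a' 0 = 0
      · have h2 : a' 1 ≠ 0 := fun h => hpair' ⟨h1, h⟩
        rw [h1, mul_zero]
        have : a' 1 * c 0 = 0 := by linear_combination -hw0' + c (-1) * h1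
        exact (mul_eq_zero.mp this).resolve_left h2
      · rw [htdef, if_neg h1, div_mul_cancel₀ _ h1]
    have ht1 : c (-1) = t * a' 1 := by
      by_cases h1 : a' 0 = 0
      · have h2 : a' 1 ≠ 0 := fun h => hpair' ⟨h1, h⟩
        rw [htdef, if_pos h1, div_mul_cancel₀ _ h2]
      · rw [htdef, if_neg h1]
        field_simp
        linear_combination hw0'
    -- proportionality
    have hpropP : ∀ m : ℕ, c ((m+1 : ℕ) : ℤ) = s * a (m+1) := by
      have key := heunPosUnique n lam mu b hmu hb
        (fun m => c ((m+1 : ℕ) : ℤ) - s * a (m+1))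
        (fun m => heunRec_sub n lam mu b _ _ _ _ _ _ _ (hv m)
          (heunRec_smul n lam mu b _ _ _ _ s (harec m)))
        (by norm_num; linear_combination hs1)
        (by norm_num; linear_combination hs2)
      intro m
      have := key m
      linear_combination this
    have hpropN : ∀ m : ℕ, c (-((m : ℕ) : ℤ)) = t * a' m := by
      have key := heunNegUnique n lam mu b hmu hbn
        (fun m => c (-((m : ℕ) : ℤ)) - t * a' m)
        (fun m => heunRec_sub n lam mu b _ _ _ _ _ _ _ (hv' m)
          (heunRec_smul n lam mu b _ _ _ _ t (ha'rec m)))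
        (by norm_num; linear_combination ht0)
        (by norm_num; linear_combination ht1)
      intro m
      have := key m
      linear_combination this
    -- gluing equations
    have eq0 : s * d0p + t * d0m = 0 := by
      have h := hcrec 0
      unfold HeunRec at h
      rw [show (0 : ℤ) - 1 = -1 from by norm_num, show (0 : ℤ) + 1 = 1 from by norm_num,
        ht1, ht0, hs1] at h
      push_cast at h
      linear_combination h + s * hd0p + t * hd0m
    have eq1 : s * d1p + t * d1m = 0 := by
      have h := hcrec 1
      unfold HeunRec at h
      rw [show (1 : ℤ) - 1 = 0 from by norm_num, show (1 : ℤ) + 1 = 2 from by norm_num,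
        ht0, hs1, hs2] at h
      push_cast at h
      linear_combination h + s * hd1p + t * hd1m
    -- s,t not both zero
    have hst : s ≠ 0 ∨ t ≠ 0 := by
      by_contra hcon
      push_neg at hcon
      obtain ⟨hs, ht⟩ := hcon
      apply hc0
      funext k
      show c k = 0
      rcases le_or_gt k 0 with hk | hk
      · obtain ⟨m, rfl⟩ : ∃ m : ℕ, k = -((m : ℕ) : ℤ) := ⟨(-k).toNat, by omega⟩
        rw [hpropN m, ht, zero_mul]
      · obtain ⟨m, rfl⟩ : ∃ m : ℕ, k = ((m+1 : ℕ) : ℤ) := ⟨(k-1).toNat, by omega⟩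
        rw [hpropP m, hs, zero_mul]
    rcases hst with hs | ht
    · have h : s * (d0p * d1m - d0m * d1p) = 0 := by
        linear_combination d1m * eq0 - d0m * eq1
      exact (mul_eq_zero.mp h).resolve_left hs
    · have h : t * (d0p * d1m - d0m * d1p) = 0 := by
        linear_combination d0p * eq1 - d1p * eq0
      exact (mul_eq_zero.mp h).resolve_left ht
  · intro hdet
    obtain ⟨s, t, hst, heq0, heq1⟩ : ∃ s t : ℂ, (s ≠ 0 ∨ t ≠ 0) ∧
        s * d0p + t * d0m = 0 ∧ s * d1p + t * d1m = 0 := by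
      by_cases h : d0p = 0 ∧ d0m = 0
      · by_cases h' : d1p = 0 ∧ d1m = 0
        · exact ⟨1, 0, Or.inl one_ne_zero, by rw [h.1, h.2]; ring, by rw [h'.1, h'.2]; ring⟩
        · refine ⟨d1m, -d1p, ?_, by rw [h.1, h.2]; ring, by ring⟩
          rcases not_and_or.mp h' with h1 | h1
          · exact Or.inr (neg_ne_zero.mpr h1)
          · exact Or.inl h1
      · refine ⟨-d0m, d0p, ?_, by ring, by linear_combination hdet⟩
        rcases not_and_or.mp h with h1 | h1
        · exact Or.inr h1
        · exact Or.inl (neg_ne_zero.mpr h1)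
    set c : ℤ → ℂ := fun k => if 0 < k then s * a k.toNat else t * a' (-k).toNat with hcdef
    have hcp : ∀ m : ℕ, c ((m : ℤ) + 1) = s * a (m + 1) := by
      intro m
      simp only [hcdef]
      rw [if_pos (show (0 : ℤ) < (m : ℤ) + 1 from by omega),
        show ((m : ℤ) + 1).toNat = m + 1 from by omega]
    have hcn : ∀ m : ℕ, c (-(m : ℤ)) = t * a' m := by
      intro m
      simp only [hcdef]
      rw [if_neg (show ¬(0 : ℤ) < -(m : ℤ) from by omega),
        show (-(-(m : ℤ))).toNat = m from by omega]
    have hc0' : c 0 = t * a' 0 := by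
      have h := hcn 0
      norm_num at h
      exact h
    have hcm1 : c (-1) = t * a' 1 := by
      have h := hcn 1
      norm_num at h
      exact h
    have hc1 : c 1 = s * a 1 := by
      have h := hcp 0
      norm_num at h
      exact h
    have hc2 : c 2 = s * a 2 := by
      have h := hcp 1
      norm_num at h
      exact h
    refine ⟨c, ?_, ?_, ?_, ?_⟩
    · intro h
      rcases hst with hs | ht
      · obtain ⟨k, hk⟩ := ha0
        apply hk
        have h2 : s * a (k + 1) = 0 := by
          rw [← hcp k]
          exact congrFun h _
        exact (mul_eq_zero.mp h2).resolve_left hs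
      · obtain ⟨m, hm⟩ := ha'0
        apply hm
        have h2 : t * a' m = 0 := by
          rw [← hcn m]
          exact congrFun h _
        exact (mul_eq_zero.mp h2).resolve_left ht
    · intro k
      by_cases hk2 : 2 ≤ k
      · obtain ⟨m, rfl⟩ : ∃ m : ℕ, k = (m : ℤ) + 2 := ⟨(k-2).toNat, by omega⟩
        rw [show ((((m : ℤ) + 2 : ℤ)) : ℂ) = (m : ℂ) + 2 from by push_cast; ring]
        rw [show (m : ℤ) + 2 - 1 = (m : ℤ) + 1 from by ring, hcp m]
        rw [show (m : ℤ) + 2 + 1 = ((m + 2 : ℕ) : ℤ) + 1 from by push_cast; ring, hcp (m+2)]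
        rw [show (m : ℤ) + 2 = ((m + 1 : ℕ) : ℤ) + 1 from by push_cast; ring, hcp (m+1)]
        exact heunRec_smul n lam mu b _ _ _ _ s (harec m)
      · by_cases hk1 : k = 1
        · subst hk1
          rw [show (1 : ℤ) - 1 = 0 from by norm_num, show (1 : ℤ) + 1 = 2 from by norm_num,
            hc0', hc1, hc2]
          unfold HeunRec
          push_cast
          linear_combination heq1 - s * hd1p - t * hd1m
        · by_cases hk0 : k = 0
          · subst hk0
            rw [show (0 : ℤ) - 1 = -1 from by norm_num, show (0 : ℤ) + 1 = 1 from by norm_num,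
              hcm1, hc0', hc1]
            unfold HeunRec
            push_cast
            linear_combination heq0 - s * hd0p - t * hd0m
          · obtain ⟨m, rfl⟩ : ∃ m : ℕ, k = -(m : ℤ) - 1 := ⟨(-k-1).toNat, by omega⟩
            rw [show (((-(m : ℤ) - 1 : ℤ)) : ℂ) = -(m : ℂ) - 1 from by push_cast; ring]
            rw [show -(m : ℤ) - 1 - 1 = -((m + 2 : ℕ) : ℤ) from by push_cast; ring, hcn (m+2)]
            rw [show -(m : ℤ) - 1 + 1 = -((m : ℕ) : ℤ) from by push_cast; ring, hcn m]
            rw [show -(m : ℤ) - 1 = -((m + 1 : ℕ) : ℤ) from by push_cast; ring, hcn (m+1)]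
            exact heunRec_smul n lam mu b _ _ _ _ t (ha'rec m)
    · intro z
      have h : Summable (fun k : ℕ => c ((k+1 : ℕ) : ℤ) * z ^ (k+1)) := by
        refine ((hasum z).mul_left s).congr ?_
        intro k
        rw [show ((k+1 : ℕ) : ℤ) = (k : ℤ) + 1 from by push_cast; ring, hcp k]
        ring
      exact (summable_nat_add_iff 1).mp h
    · intro z
      have h := ((summable_nat_add_iff 1).mpr (ha'sum z)).mul_left t
      refine h.congr ?_
      intro k
      rw [show -(k : ℤ) - 1 = -((k+1 : ℕ) : ℤ) from by push_cast; ring, hcn (k+1)]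
      ring
end

section
/- Let n, λ, μ, b ∈ ℂ with μ ≠ 0, b ∉ ℤ and b + n ∉ ℤ. For k ≥ 1 let M_k be the 2×2 complex matrix with rows (1 + λ/((k+b)(k+b+n−1)), μ²/((k+b)(k+b+n−1))) and (1, 0). Then the infinite products R_k = M_k M_{k+1} ⋯ exist for every k ≥ 1. Set c_k = (R_k)_{21} for k ≥ 1, c₀ = (R₁)_{11}, and define a_k = μ^k c_k / (b(b+1)⋯(b+k)) for k ≥ 0 (with the Pochhammer product b(b+1)⋯(b+k) of k+1 factors). Then the sequence (a_k)_{k≥0} satisfies the Heun recurrence at every k ≥ 1, and the power series ∑_{k≥1} a_k z^k has infinite radius of convergence. -/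
open Filter Topology Matrix

/-
Each factor `M k` is the matrix `!![1, 0; 1, 0]` perturbed by entries `ε k, δ k` of size
`O(k⁻²)`. A row `(x, y)` of a partial product evolves by `x ↦ x (1 + ε) + y`, `y ↦ x δ`, so
`‖x‖ + ‖y‖` grows at most by the factors `1 + ‖ε‖ + ‖δ‖`, whose product converges: the rows stay
bounded, `y` is absolutely summable and `x` is Cauchy. The limits satisfy `R k = M k * R (k+1)`,
which for `c k = (R (k+1))₁₁` is a three-term recurrence that becomes the Heun recurrence after
scaling by `μ^k / (b)_{k+1}`; since `c` is bounded and `(b)_{k+1}` grows factorially, the series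
converges everywhere.
-/

open Finset Asymptotics Bornology

lemma add_natCast_ne_zero_of_forall_ne_intCast {w : ℂ} (hw : ∀ m : ℤ, w ≠ m) (j : ℕ) :
    w + j ≠ 0 :=
  fun h => hw (-j) (by push_cast; linear_combination h)

lemma isBigO_inv_natCast_add (u : ℂ) :
    (fun j : ℕ => ((j : ℂ) + u)⁻¹) =O[atTop] fun j : ℕ => ((j : ℂ))⁻¹ := by
  have hcob : Tendsto (fun j : ℕ => (j : ℂ) + u) atTop (cobounded ℂ) :=
    (tendsto_add_const_cobounded u).comp tendsto_natCast_atTop_cobounded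
  have hu : (fun _ : ℕ => u) =O[atTop] fun j : ℕ => (j : ℂ) + u := by
    simpa using ((isLittleO_one_left_iff ℂ).2
      (tendsto_norm_cobounded_atTop.comp hcob)).isBigO.const_mul_left u
  have hj : (fun j : ℕ => (j : ℂ)) =O[atTop] fun j : ℕ => (j : ℂ) + u := by
    simpa using (isBigO_refl (fun j : ℕ => (j : ℂ) + u) atTop).sub hu
  refine hj.inv_rev ?_
  filter_upwards [eventually_ne_atTop 0] with j hj h
  exact absurd (Nat.cast_eq_zero.1 h) hj

lemma summable_norm_div_natCast_add_mul (c u v : ℂ) :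
    Summable fun j : ℕ => ‖c / (((j : ℂ) + u) * ((j : ℂ) + v))‖ := by
  have hO := ((isBigO_inv_natCast_add u).mul (isBigO_inv_natCast_add v)).const_mul_left c
  refine summable_of_isBigO_nat (Real.summable_nat_pow_inv.2 one_lt_two) ?_
  refine hO.norm_norm.congr (fun j => ?_) fun j => ?_
  · simp [div_eq_mul_inv, mul_comm]
  · simp [sq]

lemma summable_norm_pow_div_prod_add_natCast (w b : ℂ) :
    Summable fun k : ℕ => ‖w ^ k / ∏ j ∈ range (k + 1), (b + j)‖ := by
  have hsmall : Tendsto (fun k : ℕ => w * (b + (k + 1 : ℕ))⁻¹) atTop (𝓝 0) := by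
    have : Tendsto (fun k : ℕ => b + (k + 1 : ℕ)) atTop (cobounded ℂ) := by
      simpa [Function.comp_def, add_comm] using ((tendsto_add_const_cobounded b).comp
        tendsto_natCast_atTop_cobounded).comp (tendsto_add_atTop_nat 1)
    simpa using (tendsto_inv₀_cobounded.comp this).const_mul w
  refine summable_of_ratio_norm_eventually_le (r := 1 / 2) (by norm_num) ?_
  filter_upwards [NormedAddGroup.tendsto_nhds_zero.1 hsmall (1 / 2) (by norm_num)] with k hk
  have hstep : w ^ (k + 1) / ∏ j ∈ range (k + 2), (b + j)
      = w ^ k / (∏ j ∈ range (k + 1), (b + j)) * (w * (b + (k + 1 : ℕ))⁻¹) := by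
    rw [prod_range_succ _ (k + 1), pow_succ, mul_div_mul_comm, div_eq_mul_inv w]
  rw [norm_norm, norm_norm, hstep, norm_mul, mul_comm]
  gcongr

section CompanionStep

variable {x y ε δ : ℕ → ℂ} {e : ℕ → ℝ}

lemma norm_add_norm_le_prod_of_companion_step (hx : ∀ m, x (m + 1) = x m * (1 + ε (m + 1)) + y m)
    (hy : ∀ m, y (m + 1) = x m * δ (m + 1)) (he : ∀ m, ‖ε m‖ + ‖δ m‖ ≤ e m) (m : ℕ) :
    ‖x m‖ + ‖y m‖ ≤ (‖x 0‖ + ‖y 0‖) * ∏ j ∈ Icc 1 m, (1 + e j) := by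
  induction m with
  | zero => simp
  | succ m ih =>
    have he' := he (m + 1)
    have hstep : ‖x (m + 1)‖ + ‖y (m + 1)‖ ≤ (‖x m‖ + ‖y m‖) * (1 + e (m + 1)) := by
      rw [hx, hy]
      calc ‖x m * (1 + ε (m + 1)) + y m‖ + ‖x m * δ (m + 1)‖
          ≤ ‖x m‖ * (1 + ‖ε (m + 1)‖) + ‖y m‖ + ‖x m‖ * ‖δ (m + 1)‖ := by
            grw [norm_add_le, norm_mul, norm_mul, norm_add_le, norm_one]
        _ ≤ (‖x m‖ + ‖y m‖) * (1 + e (m + 1)) := by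
            nlinarith [mul_le_mul_of_nonneg_left he' (norm_nonneg (x m)), norm_nonneg (y m),
              norm_nonneg (ε (m + 1)), norm_nonneg (δ (m + 1))]
    rw [prod_Icc_succ_top (by omega), ← mul_assoc]
    exact hstep.trans (by gcongr; linarith [norm_nonneg (ε (m + 1)), norm_nonneg (δ (m + 1))])

lemma exists_tendsto_of_companion_step (hx : ∀ m, x (m + 1) = x m * (1 + ε (m + 1)) + y m)
    (hy : ∀ m, y (m + 1) = x m * δ (m + 1)) (he : ∀ m, ‖ε m‖ + ‖δ m‖ ≤ e m)
    (hes : Summable e) :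
    ∃ l, Tendsto x atTop (𝓝 l) ∧ Tendsto y atTop (𝓝 0) ∧
      ‖l‖ ≤ (‖x 0‖ + ‖y 0‖) * Real.exp (∑' j, e j) := by
  set C := (‖x 0‖ + ‖y 0‖) * Real.exp (∑' j, e j)
  have he0 : ∀ j, 0 ≤ e j := fun j => (add_nonneg (norm_nonneg _) (norm_nonneg _)).trans (he j)
  have hC : ∀ m, ‖x m‖ + ‖y m‖ ≤ C := fun m =>
    (norm_add_norm_le_prod_of_companion_step hx hy he m).trans <| mul_le_mul_of_nonneg_left
      ((Real.prod_one_add_le_exp_sum _ he0).trans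
        (Real.exp_le_exp.2 (hes.sum_le_tsum _ fun j _ => he0 j))) (by positivity)
  have hxC : ∀ m, ‖x m‖ ≤ C := fun m => by linarith [hC m, norm_nonneg (y m)]
  have hy_sum : Summable fun m => ‖y m‖ := by
    refine (summable_nat_add_iff 1).1 <| ((summable_nat_add_iff 1).2 hes).mul_left C
      |>.of_nonneg_of_le (fun _ => norm_nonneg _) fun m => ?_
    rw [hy, norm_mul]
    gcongr
    · exact hxC m
    · linarith [he (m + 1), norm_nonneg (ε (m + 1))]
  have hx_cauchy : CauchySeq x := by
    refine cauchySeq_of_dist_le_of_summable (fun m => C * e (m + 1) + ‖y m‖) (fun m => ?_)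
      ((((summable_nat_add_iff 1).2 hes).mul_left C).add hy_sum)
    rw [dist_eq_norm', hx, show x m * (1 + ε (m + 1)) + y m - x m = x m * ε (m + 1) + y m by ring]
    grw [norm_add_le, norm_mul, hxC m]
    gcongr
    linarith [he (m + 1), norm_nonneg (δ (m + 1))]
  obtain ⟨l, hl⟩ := cauchySeq_tendsto_of_complete hx_cauchy
  exact ⟨l, hl, tendsto_zero_iff_norm_tendsto_zero.2 hy_sum.tendsto_atTop_zero,
    le_of_tendsto' hl.norm hxC⟩

end CompanionStep

lemma opProd_succ_eq_mul {A : Type*} [Semigroup A] (M : ℕ → A) (k m : ℕ) :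
    opProd M k (m + 1) = M k * opProd M (k + 1) m := by
  induction m with
  | zero => rfl
  | succ m ih =>
    change opProd M k (m + 1) * M (k + (m + 1) + 1) = M k * (opProd M (k + 1) m * M (k + 1 + m + 1))
    rw [ih, mul_assoc, show k + (m + 1) + 1 = k + 1 + m + 1 by omega]

lemma eq_mul_of_tendsto_opProd {A : Type*} [Semigroup A] [TopologicalSpace A] [T2Space A]
    [ContinuousMul A] {M : ℕ → A} {k : ℕ} {L L' : A} (h : Tendsto (opProd M k) atTop (𝓝 L))
    (h' : Tendsto (opProd M (k + 1)) atTop (𝓝 L')) : L = M k * L' :=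
  tendsto_nhds_unique (h.comp (tendsto_add_atTop_nat 1))
    (by simpa only [Function.comp_def, opProd_succ_eq_mul] using h'.const_mul (M k))

theorem exists_tendsto_opProd_of_companion {M : ℕ → Matrix (Fin 2) (Fin 2) ℂ} {ε δ : ℕ → ℂ}
    {e : ℕ → ℝ} {k : ℕ} (hM : ∀ j, k ≤ j → M j = !![1 + ε j, δ j; 1, 0])
    (he : ∀ j, ‖ε j‖ + ‖δ j‖ ≤ e j) (hes : Summable e) :
    ∃ L, Tendsto (opProd M k) atTop (𝓝 L) ∧
      ∀ i, ‖L i 0‖ ≤ (1 + ∑' j, e j) * Real.exp (∑' j, e j) := by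
  have he0 : ∀ j, 0 ≤ e j := fun j => (add_nonneg (norm_nonneg _) (norm_nonneg _)).trans (he j)
  have hstep : ∀ m,
      opProd M k (m + 1) = opProd M k m * !![1 + ε (m + 1 + k), δ (m + 1 + k); 1, 0] :=
    fun m => by rw [opProd, hM _ (by omega), show k + m + 1 = m + 1 + k by omega]
  have hrow : ∀ i, ∃ l, Tendsto (fun m => opProd M k m i 0) atTop (𝓝 l) ∧
      Tendsto (fun m => opProd M k m i 1) atTop (𝓝 0) ∧
      ‖l‖ ≤ (1 + ∑' j, e j) * Real.exp (∑' j, e j) := by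
    intro i
    obtain ⟨l, hl0, hl1, hl⟩ := exists_tendsto_of_companion_step (x := fun m => opProd M k m i 0)
      (y := fun m => opProd M k m i 1) (ε := fun j => ε (j + k))
      (δ := fun j => δ (j + k)) (fun m => by simp [hstep, mul_apply, Fin.sum_univ_two])
      (fun m => by simp [hstep, mul_apply, Fin.sum_univ_two]) (fun j => he (j + k))
      ((summable_nat_add_iff k).2 hes)
    refine ⟨l, hl0, hl1, hl.trans ?_⟩
    have hfirst : ‖M k i 0‖ + ‖M k i 1‖ ≤ 1 + e k := by
      fin_cases i
      · calc ‖M k 0 0‖ + ‖M k 0 1‖ = ‖1 + ε k‖ + ‖δ k‖ := by simp [hM k le_rfl]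
          _ ≤ 1 + e k := by grw [norm_add_le, norm_one]; linarith [he k]
      · simpa [hM k le_rfl] using he0 k
    refine mul_le_mul ?_ ?_ (by positivity) ?_
    · exact hfirst.trans (by linarith [hes.le_tsum k fun j _ => he0 j])
    · exact Real.exp_le_exp.2 (tsum_comp_le_tsum_of_inj hes he0 (add_left_injective k))
    · linarith [(tsum_nonneg he0 : 0 ≤ ∑' j, e j)]
  choose l hl0 hl1 hl using hrow
  refine ⟨Matrix.of fun i => ![l i, 0], ?_, fun i => by simpa using hl i⟩
  refine tendsto_pi_nhds.2 fun i => tendsto_pi_nhds.2 fun j => ?_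
  fin_cases j
  · simpa using hl0 i
  · simpa using hl1 i

noncomputable def heunCoeff (mu b : ℂ) (c : ℕ → ℂ) (k : ℕ) : ℂ :=
  mu ^ k * c k / ∏ j ∈ range (k + 1), (b + j)

theorem heunRec_heunCoeff {n lam mu b : ℂ} {c : ℕ → ℂ} (hb : ∀ j : ℕ, b + j ≠ 0) {k : ℕ}
    (hn : (k : ℂ) + 1 + b + n - 1 ≠ 0)
    (hc : c k = (1 + lam / (((k : ℂ) + 1 + b) * ((k : ℂ) + 1 + b + n - 1))) * c (k + 1)
      + mu ^ 2 / (((k : ℂ) + 1 + b) * ((k : ℂ) + 1 + b + n - 1)) * c (k + 2)) :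
    HeunRec n lam mu b (heunCoeff mu b c k) (heunCoeff mu b c (k + 1))
      (heunCoeff mu b c (k + 2)) ((k : ℂ) + 1) := by
  have hP : ∏ j ∈ range (k + 1), (b + j) ≠ 0 := prod_ne_zero_iff.2 fun j _ => hb j
  have h1 : b + ((k : ℂ) + 1) ≠ 0 := by exact_mod_cast hb (k + 1)
  have h2 : b + ((k : ℂ) + 1 + 1) ≠ 0 := by exact_mod_cast hb (k + 2)
  have h1' : (k : ℂ) + 1 + b ≠ 0 := by rwa [add_comm]
  field_simp at hc
  simp only [HeunRec, heunCoeff, prod_range_succ _ (k + 1), prod_range_succ _ (k + 1 + 1)]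
  push_cast
  field_simp
  linear_combination (-(mu ^ (k + 1) * (b + ((k : ℂ) + 2)))) * hc

theorem summable_heunCoeff_mul_pow {mu b : ℂ} {c : ℕ → ℂ} {C : ℝ} (hc : ∀ k, ‖c k‖ ≤ C)
    (z : ℂ) : Summable fun k => heunCoeff mu b c k * z ^ k := by
  refine .of_norm_bounded ((summable_norm_pow_div_prod_add_natCast (mu * z) b).mul_left C)
    fun k => ?_
  rw [show heunCoeff mu b c k * z ^ k = c k * ((mu * z) ^ k / ∏ j ∈ range (k + 1), (b + j)) by
    simp only [heunCoeff]; ring, norm_mul]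
  exact mul_le_mul_of_nonneg_right (hc k) (norm_nonneg _)

theorem heun_forward_solution_formula_general
    (n lam mu b : ℂ)
    (hb : ∀ m : ℤ, b ≠ (m : ℂ)) (hbn : ∀ m : ℤ, b + n ≠ (m : ℂ))
    (M : ℕ → Matrix (Fin 2) (Fin 2) ℂ)
    (hM : ∀ k : ℕ, 1 ≤ k →
      M k = !![1 + lam / (((k : ℂ) + b) * ((k : ℂ) + b + n - 1)),
               mu ^ 2 / (((k : ℂ) + b) * ((k : ℂ) + b + n - 1));
               1, 0]) :
    ∃ R : ℕ → Matrix (Fin 2) (Fin 2) ℂ,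
      (∀ k : ℕ, 1 ≤ k → Tendsto (fun m => opProd M k m) atTop (nhds (R k))) ∧
      ∀ a : ℕ → ℂ,
        a 0 = R 1 0 0 / b →
        (∀ k : ℕ, 1 ≤ k →
          a k = mu ^ k * R k 1 0 / ∏ j ∈ Finset.range (k + 1), (b + (j : ℂ))) →
        (∀ k : ℕ, HeunRec n lam mu b (a k) (a (k + 1)) (a (k + 2)) ((k : ℂ) + 1)) ∧
        (∀ z : ℂ, Summable fun k : ℕ => a (k + 1) * z ^ (k + 1)) := by
  have hbj := add_natCast_ne_zero_of_forall_ne_intCast hb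
  have hbnj := add_natCast_ne_zero_of_forall_ne_intCast (w := b + n - 1)
    fun m h => hbn (m + 1) (by push_cast; linear_combination h)
  have hes := (summable_norm_div_natCast_add_mul lam b (b + n - 1)).add
    (summable_norm_div_natCast_add_mul (mu ^ 2) b (b + n - 1))
  simp only [← add_sub_assoc, ← add_assoc] at hes
  have hR : ∀ k, 1 ≤ k → ∃ L, Tendsto (opProd M k) atTop (𝓝 L) ∧ ∀ i, ‖L i 0‖ ≤ _ :=
    fun k hk => exists_tendsto_opProd_of_companion (fun j hj => hM j (hk.trans hj))
      (fun j => le_rfl) hes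
  choose! R hR_tendsto hR_bound using hR
  have hR_mul : ∀ k, 1 ≤ k → R k = M k * R (k + 1) := fun k hk =>
    eq_mul_of_tendsto_opProd (hR_tendsto k hk) (hR_tendsto (k + 1) (by omega))
  have hR10 : ∀ k, 1 ≤ k → R k 1 0 = R (k + 1) 0 0 := fun k hk => by
    simp [hR_mul k hk, hM k hk, mul_apply]
  have hR00 : ∀ k, 1 ≤ k → R k 0 0 = (1 + lam / (((k : ℂ) + b) * ((k : ℂ) + b + n - 1)))
      * R (k + 1) 0 0 + mu ^ 2 / (((k : ℂ) + b) * ((k : ℂ) + b + n - 1)) * R (k + 2) 0 0 :=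
    fun k hk => by simp [hR_mul k hk, hM k hk, mul_apply, hR10 (k + 1) (by omega)]
  refine ⟨R, hR_tendsto, fun a ha0 hak => ?_⟩
  have ha : a = heunCoeff mu b (fun k => R (k + 1) 0 0) := by
    funext k
    cases k with
    | zero => simpa [heunCoeff] using ha0
    | succ k => rw [hak _ k.succ_pos, hR10 _ k.succ_pos]; rfl
  subst ha
  exact ⟨fun k => heunRec_heunCoeff hbj
      (fun h => hbnj (k + 1) (by push_cast; linear_combination h))
      (by exact_mod_cast hR00 (k + 1) k.succ_pos),
    fun z => (summable_nat_add_iff 1).2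
      (summable_heunCoeff_mul_pow (fun k => hR_bound (k + 1) k.succ_pos 0) z)⟩

/-- Explicit forward solution via infinite matrix products: for `μ ≠ 0`, `b, b+n ∉ ℤ`, and
`M k = !![1 + λ/((k+b)(k+b+n-1)), μ²/((k+b)(k+b+n-1)); 1, 0]` (`k ≥ 1`), the infinite
products `R k = M k * M (k+1) * ⋯` exist; setting `c k = (R k)₂₁` for `k ≥ 1`,
`c 0 = (R 1)₁₁` and `a k = μ^k c k / (b(b+1)⋯(b+k))`, the sequence `a` satisfies the Heun
recurrence at every `k ≥ 1` and `∑_{k ≥ 1} a_k z^k` converges everywhere. -/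
theorem heun_forward_solution_formula
    (n lam mu b : ℂ) (hmu : mu ≠ 0)
    (hb : ∀ m : ℤ, b ≠ (m : ℂ)) (hbn : ∀ m : ℤ, b + n ≠ (m : ℂ))
    (M : ℕ → Matrix (Fin 2) (Fin 2) ℂ)
    (hM : ∀ k : ℕ, 1 ≤ k →
      M k = !![1 + lam / (((k : ℂ) + b) * ((k : ℂ) + b + n - 1)),
               mu ^ 2 / (((k : ℂ) + b) * ((k : ℂ) + b + n - 1));
               1, 0]) :
    ∃ R : ℕ → Matrix (Fin 2) (Fin 2) ℂ,
      (∀ k : ℕ, 1 ≤ k → Tendsto (fun m => opProd M k m) atTop (nhds (R k))) ∧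
      ∀ a : ℕ → ℂ,
        a 0 = R 1 0 0 / b →
        (∀ k : ℕ, 1 ≤ k →
          a k = mu ^ k * R k 1 0 / ∏ j ∈ Finset.range (k + 1), (b + (j : ℂ))) →
        (∀ k : ℕ, HeunRec n lam mu b (a k) (a (k + 1)) (a (k + 2)) ((k : ℂ) + 1)) ∧
        (∀ z : ℂ, Summable fun k : ℕ => a (k + 1) * z ^ (k + 1)) :=
  heun_forward_solution_formula_general n lam mu b hb hbn M hM
end
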